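/- arXiv:1202.3294 — 8 statements merged into one kernel-verified Lean document; each statement's English description precedes it below -/
import Mathlib

section
/- Every circuit in the simple (2,2)-sparsity matroid is 2-connected (has no cut vertex). -/
variable {V : Type*}

/-- The number of edges of `G` induced by the vertex set `X`. -/
noncomputable def indEdges (G : SimpleGraph V) (X : Set V) : ℕ :=
  {e ∈ G.edgeSet | ∀ v ∈ e, v ∈ X}.ncard

/-- A circuit in the simple (2,2)-sparsity matroid: `|E| = 2|V| - 1` and every proper
subset of vertices induces at most `2|X| - 2` edges. -/
def IsCircuit [Fintype V] (G : SimpleGraph V) : Prop :=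
  (G.edgeSet.ncard : ℤ) = 2 * Fintype.card V - 1 ∧
  ∀ X : Finset V, X ⊂ Finset.univ → indEdges G ↑X ≤ 2 * X.card - 2

/-- The degree of a vertex. -/
noncomputable def deg (G : SimpleGraph V) (v : V) : ℕ := (G.neighborSet v).ncard

lemma circuit_key [Fintype V] (G : SimpleGraph V) (hG : IsCircuit G)
    (X Y : Finset V) (hX : X ⊂ Finset.univ) (hY : Y ⊂ Finset.univ)
    (hXn : X.Nonempty) (hYn : Y.Nonempty)
    (hcard : X.card + Y.card ≤ Fintype.card V + 1)
    (hsplit : ∀ e ∈ G.edgeSet, (∀ w ∈ e, w ∈ X) ∨ (∀ w ∈ e, w ∈ Y)) : False := by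
  have hsub : G.edgeSet ⊆ {e ∈ G.edgeSet | ∀ w ∈ e, w ∈ (X : Set V)} ∪
      {e ∈ G.edgeSet | ∀ w ∈ e, w ∈ (Y : Set V)} := by
    intro e he
    rcases hsplit e he with h | h
    · exact Or.inl ⟨he, fun w hw => by simpa using h w hw⟩
    · exact Or.inr ⟨he, fun w hw => by simpa using h w hw⟩
  have hle : G.edgeSet.ncard ≤ indEdges G ↑X + indEdges G ↑Y := by
    haveI : Finite (Sym2 V) := by infer_instance
    calc G.edgeSet.ncard ≤ _ := Set.ncard_le_ncard hsub (Set.toFinite _)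
      _ ≤ _ := Set.ncard_union_le _ _
  have h1 := hG.2 X hX
  have h2 := hG.2 Y hY
  have hx := hXn.card_pos
  have hy := hYn.card_pos
  have hE := hG.1
  omega

/-- Every circuit in the simple (2,2)-sparsity matroid is 2-connected: connected,
has at least 3 vertices, and removing any vertex leaves a connected graph. -/
theorem circuit_two_connected [Fintype V] (G : SimpleGraph V) (hG : IsCircuit G) :
    G.Connected ∧ 3 ≤ Fintype.card V ∧
      ∀ v : V, (G.induce {x : V | x ≠ v}).Connected := by
  classical
  have hE := hG.1
  have hchoose : G.edgeSet.ncard ≤ (Fintype.card V).choose 2 := by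
    have h := SimpleGraph.card_edgeFinset_le_card_choose_two (G := G)
    rwa [Set.ncard_eq_toFinset_card'] at *
  have h3 : 3 ≤ Fintype.card V := by
    by_contra h
    push_neg at h
    have hc0 : Nat.choose 0 2 = 0 := rfl
    have hc1 : Nat.choose 1 2 = 0 := rfl
    have hc2 : Nat.choose 2 2 = 1 := rfl
    interval_cases hn : Fintype.card V <;> omega
  have hGconn : G.Connected := by
    rw [SimpleGraph.connected_iff]
    refine ⟨?_, Fintype.card_pos_iff.mp (by omega)⟩
    intro u w
    by_contra hr
    set A : Finset V := Finset.univ.filter (fun x => G.Reachable u x) with hA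
    have huA : u ∈ A := by
      simp only [hA, Finset.mem_filter, Finset.mem_univ, true_and]
      exact SimpleGraph.Reachable.refl u
    have hwA : w ∉ A := by simp [hA]; exact hr
    have hwAc : w ∈ Aᶜ := Finset.mem_compl.mpr hwA
    refine circuit_key G hG A Aᶜ ?_ ?_ ⟨u, huA⟩ ⟨w, hwAc⟩ ?_ ?_
    · exact Finset.ssubset_univ_iff.mpr (fun h => hwA (h ▸ Finset.mem_univ w))
    · exact Finset.ssubset_univ_iff.mpr
        (fun h => (Finset.mem_compl.mp (h ▸ Finset.mem_univ u)) huA)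
    · have := Finset.card_add_card_compl A
      omega
    · intro e he
      induction e using Sym2.ind with
      | _ a b =>
        rw [SimpleGraph.mem_edgeSet] at he
        by_cases hra : G.Reachable u a
        · left
          intro x hx
          rcases Sym2.mem_iff.mp hx with rfl | rfl
          · simpa [hA] using hra
          · simpa [hA] using hra.trans he.reachable
        · right
          intro x hx
          rcases Sym2.mem_iff.mp hx with rfl | rfl
          · simpa [hA] using hra
          · simp only [Finset.mem_compl, hA, Finset.mem_filter, Finset.mem_univ,
              true_and]
            exact fun hrb => hra (hrb.trans he.symm.reachable)
  refine ⟨hGconn, h3, ?_⟩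
  intro v
  set H : SimpleGraph {x : V | x ≠ v} := G.induce {x : V | x ≠ v} with hH
  have hnt : Nonempty {x : V | x ≠ v} := by
    obtain ⟨w, hw⟩ := Fintype.exists_ne_of_one_lt_card (by omega) v
    exact ⟨⟨w, hw⟩⟩
  rw [SimpleGraph.connected_iff]
  refine ⟨?_, hnt⟩
  intro u w
  by_contra hr
  set A : Finset V := Finset.univ.filter
    (fun x => ∃ h : x ≠ v, H.Reachable u ⟨x, h⟩) with hA
  set B : Finset V := Finset.univ.filter
    (fun x => ∃ h : x ≠ v, ¬ H.Reachable u ⟨x, h⟩) with hB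
  have hmemA : ∀ (x : V) (hx : x ≠ v), (x ∈ A ↔ H.Reachable u ⟨x, hx⟩) := by
    intro x hx
    simp only [hA, Finset.mem_filter, Finset.mem_univ, true_and]
    exact ⟨fun ⟨h, hh⟩ => hh, fun h => ⟨hx, h⟩⟩
  have hmemB : ∀ (x : V) (hx : x ≠ v), (x ∈ B ↔ ¬ H.Reachable u ⟨x, hx⟩) := by
    intro x hx
    simp only [hB, Finset.mem_filter, Finset.mem_univ, true_and]
    exact ⟨fun ⟨h, hh⟩ => hh, fun h => ⟨hx, h⟩⟩
  have hvA : v ∉ A := by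
    simp only [hA, Finset.mem_filter, Finset.mem_univ, true_and]
    exact fun ⟨h, _⟩ => h rfl
  have hvB : v ∉ B := by
    simp only [hB, Finset.mem_filter, Finset.mem_univ, true_and]
    exact fun ⟨h, _⟩ => h rfl
  have hdisj : Disjoint A B := by
    rw [Finset.disjoint_left]
    intro x hxA hxB
    rcases eq_or_ne x v with rfl | hx
    · exact hvA hxA
    · exact (hmemB x hx).mp hxB ((hmemA x hx).mp hxA)
  have hAB : A ∪ B = Finset.univ.erase v := by
    ext x
    rcases eq_or_ne x v with rfl | hx
    · simp [hvA, hvB]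
    · simp only [Finset.mem_union, Finset.mem_erase, Finset.mem_univ, and_true]
      rw [hmemA x hx, hmemB x hx]
      exact iff_of_true (em _) hx
  have hcardAB : A.card + B.card = Fintype.card V - 1 := by
    rw [← Finset.card_union_of_disjoint hdisj, hAB,
      Finset.card_erase_of_mem (Finset.mem_univ v), Finset.card_univ]
  have huA : (u : V) ∈ A := (hmemA u.1 u.2).mpr (SimpleGraph.Reachable.refl u)
  have hwB : (w : V) ∈ B := (hmemB w.1 w.2).mpr hr
  set X := insert v A with hXdef
  set Y := insert v B with hYdef
  have hwX : (w : V) ∉ X := by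
    simp only [hXdef, Finset.mem_insert]
    rintro (h | h)
    · exact w.2 h
    · exact (hmemB w.1 w.2).mp hwB ((hmemA w.1 w.2).mp h)
  have huY : (u : V) ∉ Y := by
    simp only [hYdef, Finset.mem_insert]
    rintro (h | h)
    · exact u.2 h
    · exact (hmemB u.1 u.2).mp h ((hmemA u.1 u.2).mp huA)
  refine circuit_key G hG X Y ?_ ?_ ⟨v, Finset.mem_insert_self v A⟩
    ⟨v, Finset.mem_insert_self v B⟩ ?_ ?_
  · exact Finset.ssubset_univ_iff.mpr (fun h => hwX (h ▸ Finset.mem_univ _))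
  · exact Finset.ssubset_univ_iff.mpr (fun h => huY (h ▸ Finset.mem_univ _))
  · have hXc : X.card = A.card + 1 := Finset.card_insert_of_notMem hvA
    have hYc : Y.card = B.card + 1 := Finset.card_insert_of_notMem hvB
    omega
  · intro e he
    induction e using Sym2.ind with
    | _ a b =>
      rw [SimpleGraph.mem_edgeSet] at he
      by_cases ha : a = v
      · have hb : b ≠ v := fun h => he.ne (ha.trans h.symm)
        by_cases hrb : H.Reachable u ⟨b, hb⟩
        · left
          intro x hx
          rcases Sym2.mem_iff.mp hx with rfl | rfl
          · rw [ha]; exact Finset.mem_insert_self _ _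
          · exact Finset.mem_insert_of_mem ((hmemA x hb).mpr hrb)
        · right
          intro x hx
          rcases Sym2.mem_iff.mp hx with rfl | rfl
          · rw [ha]; exact Finset.mem_insert_self _ _
          · exact Finset.mem_insert_of_mem ((hmemB x hb).mpr hrb)
      by_cases hb : b = v
      · by_cases hra : H.Reachable u ⟨a, ha⟩
        · left
          intro x hx
          rcases Sym2.mem_iff.mp hx with rfl | rfl
          · exact Finset.mem_insert_of_mem ((hmemA x ha).mpr hra)
          · rw [hb]; exact Finset.mem_insert_self _ _
        · right
          intro x hx
          rcases Sym2.mem_iff.mp hx with rfl | rfl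
          · exact Finset.mem_insert_of_mem ((hmemB x ha).mpr hra)
          · rw [hb]; exact Finset.mem_insert_self _ _
      · have hadj : H.Adj ⟨a, ha⟩ ⟨b, hb⟩ := he
        by_cases hra : H.Reachable u ⟨a, ha⟩
        · left
          intro x hx
          rcases Sym2.mem_iff.mp hx with rfl | rfl
          · exact Finset.mem_insert_of_mem ((hmemA x ha).mpr hra)
          · exact Finset.mem_insert_of_mem
              ((hmemA x hb).mpr (hra.trans hadj.reachable))
        · right
          intro x hx
          rcases Sym2.mem_iff.mp hx with rfl | rfl
          · exact Finset.mem_insert_of_mem ((hmemB x ha).mpr hra)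
          · refine Finset.mem_insert_of_mem ((hmemB x hb).mpr fun hrb => ?_)
            exact hra (hrb.trans hadj.symm.reachable)
end

section
/- Every circuit in the simple (2,2)-sparsity matroid is 3-edge-connected. -/
variable {V : Type*}

/-- Every circuit in the simple (2,2)-sparsity matroid is 3-edge-connected:
removing any set of at most 2 edges leaves a connected graph. -/
theorem circuit_three_edge_connected [Fintype V] (G : SimpleGraph V) (hG : IsCircuit G) :
    ∀ F : Set (Sym2 V), F.ncard ≤ 2 → (G.deleteEdges F).Connected := by
  classical
  intro F hF
  obtain ⟨hcard, hsparse⟩ := hG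
  have hne : Nonempty V := by
    by_contra h
    have h0 : Fintype.card V = 0 := by
      rw [Fintype.card_eq_zero_iff]
      exact not_nonempty_iff.1 h
    rw [h0] at hcard
    have : (0:ℤ) ≤ (G.edgeSet.ncard : ℤ) := Int.ofNat_nonneg _
    omega
  rw [SimpleGraph.connected_iff]
  refine ⟨?_, hne⟩
  intro u v
  by_contra hreach
  set A : Set V := {w | (G.deleteEdges F).Reachable u w} with hA
  have hu : u ∈ A := SimpleGraph.Reachable.refl u
  have hv : v ∉ A := hreach
  set EA : Set (Sym2 V) := {e ∈ G.edgeSet | ∀ x ∈ e, x ∈ A} with hEA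
  set EB : Set (Sym2 V) := {e ∈ G.edgeSet | ∀ x ∈ e, x ∈ Aᶜ} with hEB
  set EC : Set (Sym2 V) := G.edgeSet \ (EA ∪ EB) with hEC
  -- crossing edges lie in F
  have hECF : EC ⊆ F := by
    rintro e ⟨heE, heN⟩
    by_contra heF
    simp only [Set.mem_union, hEA, hEB, Set.mem_setOf_eq] at heN
    push_neg at heN
    induction e using Sym2.inductionOn with
    | hf a b =>
      have hadj : G.Adj a b := heE
      have key : ∀ x y : V, G.Adj x y → s(x, y) ∉ F → x ∈ A → y ∈ A := by
        intro x y hxy hmem hx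
        exact hx.trans (SimpleGraph.Adj.reachable
          (SimpleGraph.deleteEdges_adj.2 ⟨hxy, hmem⟩))
      rcases Classical.em (a ∈ A) with ha | ha
      · have hb : b ∈ A := key a b hadj heF ha
        obtain ⟨x, hx, hxA⟩ := heN.1 heE
        rcases Sym2.mem_iff.1 hx with rfl | rfl
        · exact hxA ha
        · exact hxA hb
      · have hb : b ∉ A := fun hb =>
          ha (key b a hadj.symm (fun hm => heF (by rwa [Sym2.eq_swap] at hm)) hb)
        obtain ⟨x, hx, hxA⟩ := heN.2 heE
        simp only [Set.mem_compl_iff, not_not] at hxA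
        rcases Sym2.mem_iff.1 hx with rfl | rfl
        · exact ha hxA
        · exact hb hxA
  have hfinA : EA.Finite := Set.toFinite _
  have hfinB : EB.Finite := Set.toFinite _
  have hfinC : EC.Finite := Set.toFinite _
  have hFfin : F.Finite := Set.toFinite _
  have hsub : G.edgeSet ⊆ EA ∪ EB ∪ EC := by
    intro e he
    by_cases h1 : e ∈ EA ∪ EB
    · exact Or.inl h1
    · exact Or.inr ⟨he, h1⟩
  have hle : G.edgeSet.ncard ≤ EA.ncard + EB.ncard + EC.ncard := by
    calc G.edgeSet.ncard ≤ (EA ∪ EB ∪ EC).ncard :=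
          Set.ncard_le_ncard hsub (Set.toFinite _)
      _ ≤ (EA ∪ EB).ncard + EC.ncard := Set.ncard_union_le _ _
      _ ≤ EA.ncard + EB.ncard + EC.ncard := by
          have := Set.ncard_union_le EA EB
          omega
  have hC2 : EC.ncard ≤ 2 := le_trans (Set.ncard_le_ncard hECF hFfin) hF
  -- sparsity bounds
  have hAproper : A.toFinset ⊂ Finset.univ := by
    rw [Finset.ssubset_univ_iff]
    intro h
    apply hv
    have : v ∈ A.toFinset := h ▸ Finset.mem_univ v
    simpa using this
  have hBproper : (Aᶜ).toFinset ⊂ Finset.univ := by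
    rw [Finset.ssubset_univ_iff]
    intro h
    have : u ∈ (Aᶜ).toFinset := h ▸ Finset.mem_univ u
    simp at this
    exact this hu
  have hboundA : EA.ncard ≤ 2 * A.toFinset.card - 2 := by
    have := hsparse A.toFinset hAproper
    simpa [indEdges, Set.coe_toFinset, hEA] using this
  have hboundB : EB.ncard ≤ 2 * (Aᶜ).toFinset.card - 2 := by
    have := hsparse (Aᶜ).toFinset hBproper
    simpa [indEdges, Set.coe_toFinset, hEB] using this
  have hAcard1 : 1 ≤ A.toFinset.card := by
    rw [Nat.one_le_iff_ne_zero, ne_eq, Finset.card_eq_zero]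
    intro h
    have : u ∈ A.toFinset := by simpa using hu
    rw [h] at this
    exact absurd this (Finset.notMem_empty u)
  have hBcard1 : 1 ≤ (Aᶜ).toFinset.card := by
    rw [Nat.one_le_iff_ne_zero, ne_eq, Finset.card_eq_zero]
    intro h
    have : v ∈ (Aᶜ).toFinset := by simpa using hv
    rw [h] at this
    exact absurd this (Finset.notMem_empty v)
  have hsum : A.toFinset.card + (Aᶜ).toFinset.card = Fintype.card V := by
    rw [Set.toFinset_compl]
    exact Finset.card_add_card_compl _
  omega
end

section
/- Let G=(V,E) be a circuit in the simple (2,2)-sparsity matroid and let X, Y ⊆ V be critical sets (i.e. i(X)=2|X|-2 and i(Y)=2|Y|-2) with |X ∩ Y| ≥ 1 and |X ∪ Y| ≤ |V|-1. Then X ∩ Y and X ∪ Y are both critical, and there are no edges between X∖Y and Y∖X. -/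
variable {V : Type*}

/-- A critical set: it induces exactly `2|X| - 2` edges. -/
def IsCritical (G : SimpleGraph V) (X : Finset V) : Prop :=
  (indEdges G ↑X : ℤ) = 2 * X.card - 2

/-- The number of edges of `G` with one endpoint in `A` and one endpoint in `B`. -/
noncomputable def crossEdges (G : SimpleGraph V) (A B : Set V) : ℕ :=
  {e ∈ G.edgeSet | ∃ a ∈ A, ∃ b ∈ B, e = s(a, b)}.ncard

lemma submodular_key [Fintype V] [DecidableEq V] (G : SimpleGraph V) (X Y : Finset V) :
    indEdges G ↑X + indEdges G ↑Y + crossEdges G ↑(X \ Y) ↑(Y \ X)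
      ≤ indEdges G ↑(X ∪ Y) + indEdges G ↑(X ∩ Y) := by
  classical
  set EX : Set (Sym2 V) := {e ∈ G.edgeSet | ∀ v ∈ e, v ∈ (↑X : Set V)} with hEX
  set EY : Set (Sym2 V) := {e ∈ G.edgeSet | ∀ v ∈ e, v ∈ (↑Y : Set V)} with hEY
  set EU : Set (Sym2 V) := {e ∈ G.edgeSet | ∀ v ∈ e, v ∈ (↑(X ∪ Y) : Set V)} with hEU
  set EI : Set (Sym2 V) := {e ∈ G.edgeSet | ∀ v ∈ e, v ∈ (↑(X ∩ Y) : Set V)} with hEI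
  set C : Set (Sym2 V) :=
    {e ∈ G.edgeSet | ∃ a ∈ (↑(X \ Y) : Set V), ∃ b ∈ (↑(Y \ X) : Set V), e = s(a, b)} with hC
  have hinter : EX ∩ EY = EI := by
    ext e
    simp only [hEX, hEY, hEI, Set.mem_inter_iff, Set.mem_setOf_eq, Finset.coe_inter,
      Finset.mem_coe, Finset.mem_inter]
    constructor
    · rintro ⟨⟨he, hx⟩, _, hy⟩
      exact ⟨he, fun v hv => ⟨hx v hv, hy v hv⟩⟩
    · rintro ⟨he, h⟩
      exact ⟨⟨he, fun v hv => (h v hv).1⟩, he, fun v hv => (h v hv).2⟩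
  have hsub : EX ∪ EY ∪ C ⊆ EU := by
    intro e he
    simp only [hEX, hEY, hC, hEU, Set.mem_union, Set.mem_setOf_eq] at he ⊢
    rcases he with (⟨he, hx⟩ | ⟨he, hy⟩) | ⟨he, a, ha, b, hb, rfl⟩
    · exact ⟨he, fun v hv => by simpa using Finset.mem_union_left Y (hx v hv)⟩
    · exact ⟨he, fun v hv => by simpa using Finset.mem_union_right X (hy v hv)⟩
    · refine ⟨he, fun v hv => ?_⟩
      simp only [Finset.coe_union, Set.mem_union, Finset.mem_coe]
      rcases Sym2.mem_iff.mp hv with rfl | rfl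
      · exact Or.inl (Finset.mem_sdiff.mp (by simpa using ha)).1
      · exact Or.inr (Finset.mem_sdiff.mp (by simpa using hb)).1
  have hdisj : Disjoint (EX ∪ EY) C := by
    rw [Set.disjoint_left]
    rintro e he ⟨_, a, ha, b, hb, rfl⟩
    simp only [Finset.coe_sdiff, Set.mem_diff, Finset.mem_coe] at ha hb
    rcases he with ⟨_, hx⟩ | ⟨_, hy⟩
    · exact hb.2 (hx b (Sym2.mem_mk_right a b))
    · exact ha.2 (hy a (Sym2.mem_mk_left a b))
  have h1 : (EX ∪ EY).ncard + EI.ncard = EX.ncard + EY.ncard := by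
    rw [← hinter]; exact Set.ncard_union_add_ncard_inter EX EY
  have h2 : (EX ∪ EY ∪ C).ncard = (EX ∪ EY).ncard + C.ncard :=
    Set.ncard_union_eq hdisj
  have h3 : (EX ∪ EY ∪ C).ncard ≤ EU.ncard := Set.ncard_le_ncard hsub (Set.toFinite _)
  show EX.ncard + EY.ncard + C.ncard ≤ EU.ncard + EI.ncard
  omega

theorem critical_inter_union [Fintype V] [DecidableEq V] (G : SimpleGraph V)
    (hG : IsCircuit G) (X Y : Finset V)
    (hX : IsCritical G X) (hY : IsCritical G Y)
    (hinter : 1 ≤ (X ∩ Y).card)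
    (hunion : (X ∪ Y).card ≤ Fintype.card V - 1) :
    IsCritical G (X ∩ Y) ∧ IsCritical G (X ∪ Y) ∧
      crossEdges G ↑(X \ Y) ↑(Y \ X) = 0 := by
  have hV : 1 ≤ Fintype.card V := by
    have : (X ∩ Y).Nonempty := Finset.card_pos.mp hinter
    obtain ⟨v, _⟩ := this
    exact Fintype.card_pos_iff.mpr ⟨v⟩
  have hUproper : X ∪ Y ⊂ Finset.univ := by
    rw [Finset.ssubset_univ_iff]
    intro h
    have h2 : (X ∪ Y).card = Fintype.card V := by rw [h, Finset.card_univ]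
    omega
  have h3 : (X ∩ Y).card ≤ (X ∪ Y).card :=
    Finset.card_le_card Finset.inter_subset_union
  have hIproper : X ∩ Y ⊂ Finset.univ := by
    rw [Finset.ssubset_univ_iff]
    intro h
    have h2 : (X ∩ Y).card = Fintype.card V := by rw [h, Finset.card_univ]
    omega
  have hU := hG.2 (X ∪ Y) hUproper
  have hI := hG.2 (X ∩ Y) hIproper
  have hkey := submodular_key G X Y
  have hcard : (X ∪ Y).card + (X ∩ Y).card = X.card + Y.card :=
    Finset.card_union_add_card_inter X Y
  unfold IsCritical at hX hY ⊢
  refine ⟨by omega, by omega, by omega⟩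
end

section
/- Let G=(V,E) be a circuit in the simple (2,2)-sparsity matroid. For every critical set X ⊊ V, the complement V∖X contains at least one vertex of degree 3 in G. -/
variable {V : Type*}

section aux
variable [Fintype V] [DecidableEq V] (G : SimpleGraph V) [DecidableRel G.Adj]

lemma indEdges_eq (X : Finset V) :
    indEdges G ↑X = (G.edgeFinset.filter (fun e => ∀ v ∈ e, v ∈ X)).card := by
  classical
  rw [indEdges, ← Set.ncard_coe_finset]
  congr 1
  ext e
  simp [SimpleGraph.mem_edgeFinset]

lemma degree_eq (v : V) :
    G.degree v = (G.edgeFinset.filter (fun e => v ∈ e)).card := by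
  rw [← SimpleGraph.card_incidenceFinset_eq_degree, SimpleGraph.incidenceFinset_eq_filter]

lemma deg_eq_degree (v : V) : deg G v = G.degree v := by
  rw [deg, Set.ncard_eq_toFinset_card', Set.toFinset_card,
    SimpleGraph.card_neighborSet_eq_degree]

lemma edgeSet_ncard : G.edgeSet.ncard = G.edgeFinset.card := by
  rw [← SimpleGraph.coe_edgeFinset, Set.ncard_coe_finset]

lemma sum_deg_eq (Y : Finset V) :
    ∑ v ∈ Y, G.degree v = ∑ e ∈ G.edgeFinset, (Y.filter (· ∈ e)).card := by
  simp only [degree_eq, Finset.card_filter]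
  rw [Finset.sum_comm]

lemma pointwise_bound (X : Finset V) (e : Sym2 V) (he : e ∈ G.edgeFinset) :
    ((Xᶜ).filter (· ∈ e)).card ≤
      (if ∀ v ∈ e, v ∈ X then 0 else 1) + (if ∀ v ∈ e, v ∈ Xᶜ then 1 else 0) := by
  induction e using Sym2.ind with
  | _ a b =>
    rw [SimpleGraph.mem_edgeFinset, SimpleGraph.mem_edgeSet] at he
    have hne : a ≠ b := he.ne
    have hfil : (Xᶜ).filter (· ∈ s(a, b)) = (Xᶜ).filter (· = a) ∪ (Xᶜ).filter (· = b) := by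
      rw [← Finset.filter_or]
      apply Finset.filter_congr
      intro v _
      simp [Sym2.mem_iff]
    rw [hfil, Finset.filter_eq', Finset.filter_eq']
    simp only [Sym2.mem_iff, forall_eq_or_imp, forall_eq]
    by_cases ha : a ∈ X <;> by_cases hb : b ∈ X <;>
      simp [ha, hb, Finset.mem_compl, hne] <;>
      exact (Finset.card_union_le _ _).trans (by simp)

lemma three_le_degree (hG : IsCircuit G) (hn : 2 ≤ Fintype.card V) (v : V) :
    3 ≤ G.degree v := by
  have hA : Finset.univ.erase v ⊂ Finset.univ :=
    Finset.erase_ssubset (Finset.mem_univ v)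
  have h1 := hG.2 _ hA
  rw [indEdges_eq] at h1
  have hcard : (Finset.univ.erase v).card = Fintype.card V - 1 := by
    rw [Finset.card_erase_of_mem (Finset.mem_univ v), Finset.card_univ]
  have hfil : G.edgeFinset.filter (fun e => ∀ w ∈ e, w ∈ Finset.univ.erase v)
      = G.edgeFinset.filter (fun e => ¬ v ∈ e) := by
    apply Finset.filter_congr
    intro e _
    constructor
    · intro hall hv
      exact (Finset.mem_erase.1 (hall v hv)).1 rfl
    · intro hv w hw
      exact Finset.mem_erase.2 ⟨fun h => hv (h ▸ hw), Finset.mem_univ w⟩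
  rw [hfil] at h1
  have h2 := Finset.card_filter_add_card_filter_not
    (s := G.edgeFinset) (p := fun e => v ∈ e)
  have h3 := degree_eq G v
  have hE : (G.edgeFinset.card : ℤ) = 2 * Fintype.card V - 1 := by
    rw [← edgeSet_ncard]; exact hG.1
  omega

lemma sum_ind_one (X : Finset V) :
    ∑ e ∈ G.edgeFinset, (if ∀ v ∈ e, v ∈ X then 0 else 1)
      = G.edgeFinset.card - indEdges G ↑X := by
  rw [indEdges_eq]
  have h2 := Finset.card_filter_add_card_filter_not
    (s := G.edgeFinset) (p := fun e => ∀ v ∈ e, v ∈ X)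
  have : ∑ e ∈ G.edgeFinset, (if ∀ v ∈ e, v ∈ X then 0 else 1)
      = (G.edgeFinset.filter (fun e => ¬ ∀ v ∈ e, v ∈ X)).card := by
    rw [Finset.card_filter]
    simp only [ite_not]
  omega

lemma sum_ind_two (X : Finset V) :
    ∑ e ∈ G.edgeFinset, (if ∀ v ∈ e, v ∈ Xᶜ then 1 else 0) = indEdges G ↑(Xᶜ) := by
  rw [indEdges_eq, Finset.card_filter]

end aux

/-- The complement of any proper critical set of a circuit contains a node
(a vertex of degree 3). -/
theorem critical_complement_has_node [Fintype V] (G : SimpleGraph V)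
    (hG : IsCircuit G) (X : Finset V) (hXp : X ⊂ Finset.univ)
    (hX : IsCritical G X) :
    ∃ v : V, v ∉ X ∧ deg G v = 3 := by
  classical
  by_contra hcon
  push_neg at hcon
  -- X is nonempty
  have hXne : X.Nonempty := by
    rcases X.eq_empty_or_nonempty with h | h
    · exfalso
      rw [IsCritical, h] at hX
      simp at hX
    · exact h
  -- Xᶜ is nonempty
  have hYne : (Xᶜ : Finset V).Nonempty := by
    obtain ⟨a, -, ha⟩ := Finset.exists_of_ssubset hXp
    exact ⟨a, Finset.mem_compl.2 ha⟩
  have hcards : X.card + (Xᶜ : Finset V).card = Fintype.card V := by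
    rw [Finset.card_add_card_compl]
  have hn : 2 ≤ Fintype.card V := by
    have h1 := Finset.card_pos.2 hXne
    have h2 := Finset.card_pos.2 hYne
    omega
  have hYp : (Xᶜ : Finset V) ⊂ Finset.univ := by
    rw [Finset.ssubset_univ_iff]
    intro h
    obtain ⟨x, hx⟩ := hXne
    have : x ∈ (Xᶜ : Finset V) := h ▸ Finset.mem_univ x
    exact Finset.mem_compl.1 this hx
  have hY := hG.2 _ hYp
  -- each vertex outside X has degree ≥ 4
  have hdeg4 : ∀ v ∈ (Xᶜ : Finset V), 4 ≤ G.degree v := by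
    intro v hv
    have h3 := three_le_degree G hG hn v
    have hne3 := hcon v (Finset.mem_compl.1 hv)
    rw [deg_eq_degree] at hne3
    omega
  have hsum1 : 4 * (Xᶜ : Finset V).card ≤ ∑ v ∈ (Xᶜ : Finset V), G.degree v := by
    calc 4 * (Xᶜ : Finset V).card = (Xᶜ : Finset V).card • 4 := by
          rw [smul_eq_mul, mul_comm]
      _ ≤ ∑ v ∈ (Xᶜ : Finset V), G.degree v := Finset.card_nsmul_le_sum _ _ _ hdeg4
  have hsum2 : ∑ v ∈ (Xᶜ : Finset V), G.degree v ≤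
      (G.edgeFinset.card - indEdges G ↑X) + indEdges G ↑(Xᶜ : Finset V) := by
    rw [sum_deg_eq, ← sum_ind_one, ← sum_ind_two, ← Finset.sum_add_distrib]
    exact Finset.sum_le_sum (fun e he => pointwise_bound G X e he)
  have hindle : indEdges G ↑X ≤ G.edgeFinset.card := by
    rw [indEdges_eq]
    exact Finset.card_filter_le _ _
  have hE : (G.edgeFinset.card : ℤ) = 2 * Fintype.card V - 1 := by
    rw [← edgeSet_ncard]; exact hG.1
  rw [IsCritical] at hX
  have hXc := Finset.card_pos.2 hXne
  have hYc := Finset.card_pos.2 hYne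
  omega
end

section
/- Let G=(V,E) be a circuit in the simple (2,2)-sparsity matroid, let v be a vertex of degree 3 with neighbours u, w, z, and let G' be the graph obtained from G by deleting v (and its three edges) and adding the edge uw. Then G' fails to be a circuit in the simple (2,2)-sparsity matroid if and only if either uw ∈ E, or there exists a critical set X ⊊ V with u,w ∈ X and v,z ∉ X. -/
variable {V : Type*}

/-- The inverse Henneberg 2 move: delete the vertex `v` (and its incident edges)
and add the edge `pq` between two of its former neighbours. -/
def delAdd (G : SimpleGraph V) (v : V) (p q : {x : V // x ≠ v}) :
    SimpleGraph {x : V // x ≠ v} :=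
  SimpleGraph.fromEdgeSet
    ({e | ∃ x y : {x : V // x ≠ v}, G.Adj ↑x ↑y ∧ e = s(x, y)} ∪ {s(p, q)})


section Aux
open Set

lemma delAdd_adj (G : SimpleGraph V) (v : V) (p q : {x : V // x ≠ v}) (hpq : p ≠ q)
    (a b : {x : V // x ≠ v}) :
    (delAdd G v p q).Adj a b ↔ (G.Adj ↑a ↑b ∨ s(a,b) = s(p,q)) := by
  simp only [delAdd, SimpleGraph.fromEdgeSet_adj, Set.mem_union, Set.mem_setOf_eq,
    Set.mem_singleton_iff]
  constructor
  · rintro ⟨h | h, hne⟩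
    · obtain ⟨x, y, hxy, he⟩ := h
      rw [Sym2.eq_iff] at he
      rcases he with ⟨rfl, rfl⟩ | ⟨rfl, rfl⟩
      · exact Or.inl hxy
      · exact Or.inl hxy.symm
    · exact Or.inr h
  · rintro (h | h)
    · refine ⟨Or.inl ⟨a, b, h, rfl⟩, ?_⟩
      rintro rfl; exact G.irrefl h
    · refine ⟨Or.inr h, ?_⟩
      rintro rfl
      rw [Sym2.eq_iff] at h
      rcases h with ⟨h1, h2⟩ | ⟨h1, h2⟩
      · exact hpq (h1.symm.trans h2)
      · exact hpq (h2.symm.trans h1)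

lemma delAdd_indSet (G : SimpleGraph V) (v : V) (p q : {x : V // x ≠ v}) (hpq : p ≠ q)
    (Y : Set {x : V // x ≠ v}) :
    Sym2.map (Subtype.val) '' {e ∈ (delAdd G v p q).edgeSet | ∀ a ∈ e, a ∈ Y} =
      {e ∈ ({e ∈ G.edgeSet | v ∉ e} ∪ {s(↑p, ↑q)}) | ∀ x ∈ e, x ∈ Subtype.val '' Y} := by
  ext e
  constructor
  · rintro ⟨e', ⟨he', hY⟩, rfl⟩
    induction e' using Sym2.ind with
    | _ a b =>
      rw [SimpleGraph.mem_edgeSet, delAdd_adj G v p q hpq] at he'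
      refine ⟨?_, ?_⟩
      · rcases he' with h | h
        · left
          rw [Sym2.map_pair_eq]
          refine ⟨h, ?_⟩
          rw [Sym2.mem_iff]
          rintro (h' | h')
          · exact a.2 h'.symm
          · exact b.2 h'.symm
        · right
          rw [h, Sym2.map_pair_eq]; rfl
      · intro x hx
        rw [Sym2.map_pair_eq, Sym2.mem_iff] at hx
        rcases hx with rfl | rfl
        · exact ⟨a, hY a (Sym2.mem_mk_left a b), rfl⟩
        · exact ⟨b, hY b (Sym2.mem_mk_right a b), rfl⟩
  · rintro ⟨hmem | hmem, hX⟩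
    · obtain ⟨heE, hv⟩ := hmem
      induction e using Sym2.ind with
      | _ x y =>
        rw [Sym2.mem_iff] at hv
        push_neg at hv
        refine ⟨s(⟨x, fun h => hv.1 h.symm⟩, ⟨y, fun h => hv.2 h.symm⟩), ⟨?_, ?_⟩, ?_⟩
        · rw [SimpleGraph.mem_edgeSet, delAdd_adj G v p q hpq]
          exact Or.inl heE
        · intro c hc
          rw [Sym2.mem_iff] at hc
          rcases hc with rfl | rfl
          · exact Subtype.val_injective.mem_set_image.mp (hX x (Sym2.mem_mk_left x y))
          · exact Subtype.val_injective.mem_set_image.mp (hX y (Sym2.mem_mk_right x y))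
        · rw [Sym2.map_pair_eq]
    · rw [Set.mem_singleton_iff] at hmem
      subst hmem
      refine ⟨s(p, q), ⟨?_, ?_⟩, ?_⟩
      · rw [SimpleGraph.mem_edgeSet, delAdd_adj G v p q hpq]
        exact Or.inr rfl
      · intro c hc
        rw [Sym2.mem_iff] at hc
        rcases hc with h | h
        · rw [h]
          exact Subtype.val_injective.mem_set_image.mp (hX p.val (Sym2.mem_mk_left _ _))
        · rw [h]
          exact Subtype.val_injective.mem_set_image.mp (hX q.val (Sym2.mem_mk_right _ _))
      · rw [Sym2.map_pair_eq]

lemma not_v_mem_val_image {v : V} (Y : Set {x : V // x ≠ v}) : v ∉ Subtype.val '' Y := by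
  rintro ⟨a, _, ha⟩; exact a.2 ha

lemma indEdges_delAdd_both_notE [Fintype V] (G : SimpleGraph V) (v : V)
    (p q : {x : V // x ≠ v}) (hpq : p ≠ q) (Y : Set {x : V // x ≠ v})
    (hp : p ∈ Y) (hq : q ∈ Y) (hE : s((p : V), (q : V)) ∉ G.edgeSet) :
    indEdges (delAdd G v p q) Y = indEdges G (Subtype.val '' Y) + 1 := by
  unfold indEdges
  rw [← Set.ncard_image_of_injective _ (Sym2.map.injective Subtype.val_injective),
    delAdd_indSet G v p q hpq Y]
  have h1 : {e ∈ ({e ∈ G.edgeSet | v ∉ e} ∪ {s((p : V), (q : V))}) |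
        ∀ x ∈ e, x ∈ Subtype.val '' Y}
      = insert s((p : V), (q : V)) {e ∈ G.edgeSet | ∀ x ∈ e, x ∈ Subtype.val '' Y} := by
    ext e
    simp only [Set.mem_union, Set.mem_setOf_eq, Set.mem_singleton_iff, Set.mem_insert_iff]
    constructor
    · rintro ⟨h | h, hsub⟩
      · exact Or.inr ⟨h.1, hsub⟩
      · exact Or.inl h
    · rintro (rfl | ⟨hE', hsub⟩)
      · refine ⟨Or.inr rfl, ?_⟩
        intro x hx
        rw [Sym2.mem_iff] at hx
        rcases hx with rfl | rfl
        · exact ⟨p, hp, rfl⟩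
        · exact ⟨q, hq, rfl⟩
      · refine ⟨Or.inl ⟨hE', ?_⟩, hsub⟩
        intro hv; exact not_v_mem_val_image Y (hsub v hv)
  rw [h1, Set.ncard_insert_of_notMem (fun hmem => hE hmem.1) (Set.toFinite _)]

lemma indEdges_delAdd_both_E [Fintype V] (G : SimpleGraph V) (v : V)
    (p q : {x : V // x ≠ v}) (hpq : p ≠ q) (Y : Set {x : V // x ≠ v})
    (hE : s((p : V), (q : V)) ∈ G.edgeSet) :
    indEdges (delAdd G v p q) Y = indEdges G (Subtype.val '' Y) := by
  unfold indEdges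
  rw [← Set.ncard_image_of_injective _ (Sym2.map.injective Subtype.val_injective),
    delAdd_indSet G v p q hpq Y]
  congr 1
  ext e
  simp only [Set.mem_union, Set.mem_setOf_eq, Set.mem_singleton_iff]
  constructor
  · rintro ⟨h | h, hsub⟩
    · exact ⟨h.1, hsub⟩
    · exact ⟨h ▸ hE, hsub⟩
  · rintro ⟨hE', hsub⟩
    exact ⟨Or.inl ⟨hE', fun hv => not_v_mem_val_image Y (hsub v hv)⟩, hsub⟩

lemma indEdges_delAdd_not_both [Fintype V] (G : SimpleGraph V) (v : V)
    (p q : {x : V // x ≠ v}) (hpq : p ≠ q) (Y : Set {x : V // x ≠ v})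
    (h : p ∉ Y ∨ q ∉ Y) :
    indEdges (delAdd G v p q) Y = indEdges G (Subtype.val '' Y) := by
  unfold indEdges
  rw [← Set.ncard_image_of_injective _ (Sym2.map.injective Subtype.val_injective),
    delAdd_indSet G v p q hpq Y]
  congr 1
  ext e
  simp only [Set.mem_union, Set.mem_setOf_eq, Set.mem_singleton_iff]
  constructor
  · rintro ⟨hm | hm, hsub⟩
    · exact ⟨hm.1, hsub⟩
    · exfalso
      subst hm
      have hp : p ∈ Y := Subtype.val_injective.mem_set_image.mp
        (hsub (p : V) (Sym2.mem_mk_left _ _))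
      have hq : q ∈ Y := Subtype.val_injective.mem_set_image.mp
        (hsub (q : V) (Sym2.mem_mk_right _ _))
      tauto
  · rintro ⟨hE', hsub⟩
    exact ⟨Or.inl ⟨hE', fun hv => not_v_mem_val_image Y (hsub v hv)⟩, hsub⟩

lemma indEdges_univ (G : SimpleGraph V) : indEdges G Set.univ = G.edgeSet.ncard := by
  unfold indEdges
  congr 1
  ext e
  simp

lemma val_image_univ {v : V} :
    (Subtype.val '' (Set.univ : Set {x : V // x ≠ v})) = {x | x ≠ v} := by
  rw [Set.image_univ, Subtype.range_coe_subtype]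

lemma ncard_incidenceSet [DecidableEq V] (G : SimpleGraph V) (v : V) :
    (G.incidenceSet v).ncard = deg G v := by
  unfold deg
  rw [← Nat.card_coe_set_eq, ← Nat.card_coe_set_eq]
  exact Nat.card_congr (G.incidenceSetEquivNeighborSet v)

lemma indEdges_compl [Fintype V] [DecidableEq V] (G : SimpleGraph V) (v : V) :
    indEdges G {x | x ≠ v} = G.edgeSet.ncard - deg G v := by
  unfold indEdges
  have h1 : {e ∈ G.edgeSet | ∀ x ∈ e, x ∈ {x | x ≠ v}} = G.edgeSet \ G.incidenceSet v := by
    ext e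
    simp only [Set.mem_setOf_eq, Set.mem_diff, SimpleGraph.incidenceSet]
    constructor
    · rintro ⟨he, hall⟩
      exact ⟨he, fun h => hall v h.2 rfl⟩
    · rintro ⟨he, hno⟩
      exact ⟨he, fun x hx hxv => hno ⟨he, hxv ▸ hx⟩⟩
  rw [h1, Set.ncard_diff (fun e he => he.1) (Set.toFinite _), ncard_incidenceSet]

lemma deg_le_ncard_edgeSet [Fintype V] [DecidableEq V] (G : SimpleGraph V) (v : V) :
    deg G v ≤ G.edgeSet.ncard := by
  rw [← ncard_incidenceSet]
  exact Set.ncard_le_ncard (fun e he => he.1) (Set.toFinite _)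

lemma card_subtype_ne [Fintype V] [DecidableEq V] (v : V) :
    Fintype.card {x : V // x ≠ v} = Fintype.card V - 1 := by
  have := Fintype.card_subtype_compl (fun x : V => x = v)
  simp only [Fintype.card_subtype_eq] at this
  convert this using 2

lemma indEdges_insert_adj [Fintype V] (G : SimpleGraph V) (v : V) (X : Set V) (hv : v ∉ X)
    (a b c : V) (ha : a ∈ X) (hb : b ∈ X) (hc : c ∈ X)
    (hab : a ≠ b) (hac : a ≠ c) (hbc : b ≠ c)
    (hva : G.Adj v a) (hvb : G.Adj v b) (hvc : G.Adj v c) :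
    indEdges G X + 3 ≤ indEdges G (insert v X) := by
  have hav : a ≠ v := fun h => hv (h ▸ ha)
  have hbv : b ≠ v := fun h => hv (h ▸ hb)
  have hcv : c ≠ v := fun h => hv (h ▸ hc)
  unfold indEdges
  have hsub : {e ∈ G.edgeSet | ∀ x ∈ e, x ∈ X} ∪ {s(v,a), s(v,b), s(v,c)}
      ⊆ {e ∈ G.edgeSet | ∀ x ∈ e, x ∈ insert v X} := by
    rintro e (⟨he, hx⟩ | he)
    · exact ⟨he, fun x hxe => Set.mem_insert_of_mem v (hx x hxe)⟩
    · simp only [Set.mem_insert_iff, Set.mem_singleton_iff] at he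
      rcases he with rfl | rfl | rfl
      · refine ⟨hva, fun x hx => ?_⟩
        rcases Sym2.mem_iff.mp hx with rfl | rfl
        · exact Set.mem_insert x X
        · exact Set.mem_insert_of_mem v ha
      · refine ⟨hvb, fun x hx => ?_⟩
        rcases Sym2.mem_iff.mp hx with rfl | rfl
        · exact Set.mem_insert x X
        · exact Set.mem_insert_of_mem v hb
      · refine ⟨hvc, fun x hx => ?_⟩
        rcases Sym2.mem_iff.mp hx with rfl | rfl
        · exact Set.mem_insert x X
        · exact Set.mem_insert_of_mem v hc
  have hdisj : Disjoint {e ∈ G.edgeSet | ∀ x ∈ e, x ∈ X}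
      ({s(v,a), s(v,b), s(v,c)} : Set (Sym2 V)) := by
    rw [Set.disjoint_left]
    rintro e ⟨he, hx⟩ hmem
    simp only [Set.mem_insert_iff, Set.mem_singleton_iff] at hmem
    rcases hmem with rfl | rfl | rfl <;>
      exact hv (hx v (Sym2.mem_mk_left _ _))
  have hcard3 : ({s(v,a), s(v,b), s(v,c)} : Set (Sym2 V)).ncard = 3 := by
    rw [Set.ncard_insert_of_notMem ?h1 (Set.toFinite _),
      Set.ncard_insert_of_notMem ?h2 (Set.toFinite _), Set.ncard_singleton]
    case h1 =>
      simp only [Set.mem_insert_iff, Set.mem_singleton_iff]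
      rintro (h | h) <;> rw [Sym2.eq_iff] at h <;>
        rcases h with ⟨-, h2⟩ | ⟨h1, h2⟩
      · exact hab h2
      · exact hav h2
      · exact hac h2
      · exact hav h2
    case h2 =>
      simp only [Set.mem_singleton_iff]
      intro h
      rw [Sym2.eq_iff] at h
      rcases h with ⟨-, h2⟩ | ⟨h1, h2⟩
      · exact hbc h2
      · exact hbv h2
  calc {e ∈ G.edgeSet | ∀ x ∈ e, x ∈ X}.ncard + 3
      = ({e ∈ G.edgeSet | ∀ x ∈ e, x ∈ X} ∪ {s(v,a), s(v,b), s(v,c)}).ncard := by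
        rw [Set.ncard_union_eq hdisj (Set.toFinite _) (Set.toFinite _), hcard3]
    _ ≤ _ := Set.ncard_le_ncard hsub (Set.toFinite _)

end Aux

theorem inverse_henneberg_not_circuit_iff [Fintype V] [DecidableEq V]
    (G : SimpleGraph V) (hG : IsCircuit G) (v : V)
    (u w z : {x : V // x ≠ v})
    (hdeg : deg G v = 3)
    (hN : G.neighborSet v = {↑u, ↑w, ↑z})
    (huw : u ≠ w) (huz : u ≠ z) (hwz : w ≠ z) :
    ¬ IsCircuit (delAdd G v u w) ↔
      (G.Adj ↑u ↑w ∨ ∃ X : Finset V, X ⊂ Finset.univ ∧ IsCritical G X ∧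
        ↑u ∈ X ∧ ↑w ∈ X ∧ v ∉ X ∧ ↑z ∉ X) := by
  classical
  have hcuw : (u : V) ≠ w := fun h => huw (Subtype.ext h)
  have hcuz : (u : V) ≠ z := fun h => huz (Subtype.ext h)
  have hcwz : (w : V) ≠ z := fun h => hwz (Subtype.ext h)
  have hadju : G.Adj v ↑u := by
    have : (u : V) ∈ G.neighborSet v := by rw [hN]; simp
    exact this
  have hadjw : G.Adj v ↑w := by
    have : (w : V) ∈ G.neighborSet v := by rw [hN]; simp
    exact this
  have hadjz : G.Adj v ↑z := by
    have : (z : V) ∈ G.neighborSet v := by rw [hN]; simp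
    exact this
  have hn1 : 1 ≤ Fintype.card V := Fintype.card_pos_iff.mpr ⟨v⟩
  have hE3 : 3 ≤ G.edgeSet.ncard := hdeg ▸ deg_le_ncard_edgeSet G v
  have hEcount : (G.edgeSet.ncard : ℤ) = 2 * Fintype.card V - 1 := hG.1
  have hcardV' : Fintype.card {x : V // x ≠ v} = Fintype.card V - 1 := card_subtype_ne v
  have hAdjCase : G.Adj ↑u ↑w → ¬ IsCircuit (delAdd G v u w) := by
    intro hadj hcirc
    have hcnt : (delAdd G v u w).edgeSet.ncard = G.edgeSet.ncard - deg G v := by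
      rw [← indEdges_univ,
        indEdges_delAdd_both_E G v u w huw _ ((SimpleGraph.mem_edgeSet G).mpr hadj),
        val_image_univ, indEdges_compl]
    have hc1 := hcirc.1
    rw [hcnt, hdeg, hcardV'] at hc1
    omega
  constructor
  · intro hnot
    by_contra hc
    push_neg at hc
    obtain ⟨hnadj, hnocrit⟩ := hc
    have hE : s((u : V), (w : V)) ∉ G.edgeSet := fun hm =>
      hnadj ((SimpleGraph.mem_edgeSet G).mp hm)
    refine hnot ⟨?_, ?_⟩
    · have hcnt : (delAdd G v u w).edgeSet.ncard = G.edgeSet.ncard - deg G v + 1 := by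
        rw [← indEdges_univ,
          indEdges_delAdd_both_notE G v u w huw _ (Set.mem_univ u) (Set.mem_univ w) hE,
          val_image_univ, indEdges_compl]
      rw [hcnt, hdeg, hcardV']
      omega
    · intro Y hYss
      have hXcoe : (↑(Y.image Subtype.val) : Set V) = Subtype.val '' (↑Y : Set {x : V // x ≠ v}) := by
        rw [Finset.coe_image]
      have hXcard : (Y.image Subtype.val).card = Y.card :=
        Finset.card_image_of_injective Y Subtype.val_injective
      have hvX : v ∉ Y.image Subtype.val := by
        intro hmem
        obtain ⟨a, -, ha⟩ := Finset.mem_image.mp hmem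
        exact a.2 ha
      have hXss : Y.image Subtype.val ⊂ Finset.univ :=
        Finset.ssubset_univ_iff.mpr (fun h => hvX (h.symm ▸ Finset.mem_univ v))
      have hle := hG.2 (Y.image Subtype.val) hXss
      by_cases huY : u ∈ Y
      · by_cases hwY : w ∈ Y
        · rw [indEdges_delAdd_both_notE G v u w huw _ (Finset.mem_coe.mpr huY)
            (Finset.mem_coe.mpr hwY) hE, ← hXcoe]
          have hcard2 : 2 ≤ (Y.image Subtype.val).card :=
            Finset.one_lt_card.mpr ⟨↑u, Finset.mem_image_of_mem _ huY,
              ↑w, Finset.mem_image_of_mem _ hwY, hcuw⟩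
          have hnotcrit : ¬ IsCritical G (Y.image Subtype.val) := by
            intro hcrit
            have hzX : (z : V) ∈ Y.image Subtype.val :=
              hnocrit _ hXss hcrit (Finset.mem_image_of_mem _ huY)
                (Finset.mem_image_of_mem _ hwY) hvX
            obtain ⟨x0, -, hx0⟩ := Finset.exists_of_ssubset hYss
            have hX'ss : insert v (Y.image Subtype.val) ⊂ Finset.univ := by
              rw [Finset.ssubset_univ_iff]
              intro hcontra
              have hx0mem : (x0 : V) ∈ insert v (Y.image Subtype.val) :=
                hcontra.symm ▸ Finset.mem_univ _
              rcases Finset.mem_insert.mp hx0mem with h | h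
              · exact x0.2 h
              · obtain ⟨b, hb, hb2⟩ := Finset.mem_image.mp h
                exact hx0 (Subtype.ext hb2 ▸ hb)
            have hins := hG.2 _ hX'ss
            have hinscard : (insert v (Y.image Subtype.val)).card
                = (Y.image Subtype.val).card + 1 := Finset.card_insert_of_notMem hvX
            have hindins : indEdges G ↑(Y.image Subtype.val) + 3
                ≤ indEdges G ↑(insert v (Y.image Subtype.val)) := by
              rw [Finset.coe_insert]
              exact indEdges_insert_adj G v _ (by exact_mod_cast hvX) ↑u ↑w ↑z
                (Finset.mem_coe.mpr (Finset.mem_image_of_mem _ huY))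
                (Finset.mem_coe.mpr (Finset.mem_image_of_mem _ hwY))
                (Finset.mem_coe.mpr hzX) hcuw hcuz hcwz hadju hadjw hadjz
            unfold IsCritical at hcrit
            rw [hinscard] at hins
            omega
          unfold IsCritical at hnotcrit
          omega
        · rw [indEdges_delAdd_not_both G v u w huw _
            (Or.inr (fun hmem => hwY (Finset.mem_coe.mp hmem))), ← hXcoe]
          omega
      · rw [indEdges_delAdd_not_both G v u w huw _
          (Or.inl (fun hmem => huY (Finset.mem_coe.mp hmem))), ← hXcoe]
        omega
  · rintro (hadj | ⟨X, hXss, hXcrit, huX, hwX, hvX, hzX⟩)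
    · exact hAdjCase hadj
    · by_cases hadj : G.Adj ↑u ↑w
      · exact hAdjCase hadj
      intro hcirc
      have hE : s((u : V), (w : V)) ∉ G.edgeSet := fun hm =>
        hadj ((SimpleGraph.mem_edgeSet G).mp hm)
      set Y : Finset {x : V // x ≠ v} := Finset.univ.filter (fun a => ↑a ∈ X) with hY
      have hYcoe : Subtype.val '' (↑Y : Set {x : V // x ≠ v}) = ↑X := by
        ext x
        simp only [hY, Finset.coe_filter, Finset.mem_univ, true_and, Set.mem_image,
          Set.mem_setOf_eq]
        constructor
        · rintro ⟨a, ha, rfl⟩; exact ha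
        · intro hx
          exact ⟨⟨x, fun h => hvX (h ▸ hx)⟩, hx, rfl⟩
      have hYcard : Y.card = X.card := by
        have h2 := Set.ncard_image_of_injective (↑Y : Set {x : V // x ≠ v})
          Subtype.val_injective
        rw [hYcoe, Set.ncard_coe_finset, Set.ncard_coe_finset] at h2
        exact h2.symm
      have huY : u ∈ Y := by simp [hY, huX]
      have hwY : w ∈ Y := by simp [hY, hwX]
      have hzY : z ∉ Y := by simp [hY, hzX]
      have hYss : Y ⊂ Finset.univ :=
        Finset.ssubset_univ_iff.mpr (fun h => hzY (h.symm ▸ Finset.mem_univ z))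
      have hspars := hcirc.2 Y hYss
      have hind : indEdges (delAdd G v u w) ↑Y = indEdges G ↑X + 1 := by
        rw [indEdges_delAdd_both_notE G v u w huw _ (Finset.mem_coe.mpr huY)
          (Finset.mem_coe.mpr hwY) hE, hYcoe]
      have hcard2 : 2 ≤ X.card := Finset.one_lt_card.mpr ⟨↑u, huX, ↑w, hwX, hcuw⟩
      unfold IsCritical at hXcrit
      omega
end

section
/- Let G be a circuit in the simple (2,2)-sparsity matroid and let G' be obtained from G by a Henneberg 2 move: delete an edge xy, add a new vertex v, and add edges vx, vy, vz for some existing vertex z distinct from x and y. Then G' is a circuit in the simple (2,2)-sparsity matroid. -/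
variable {V : Type*}

/-- The Henneberg 2 move: delete the edge `xy`, add a new vertex (`none`), and join
the new vertex to `x`, `y` and a third vertex `z`. -/
def henneberg2 (G : SimpleGraph V) (x y z : V) : SimpleGraph (Option V) :=
  SimpleGraph.fromEdgeSet
    ({e | ∃ a b : V, G.Adj a b ∧ s(a, b) ≠ s(x, y) ∧ e = s(some a, some b)} ∪
     {s(none, some x), s(none, some y), s(none, some z)})

private lemma sym2_some_inj : Function.Injective (Sym2.map (some : V → Option V)) :=
  Sym2.map.injective (Option.some_injective V)

private lemma none_not_mem_map {e : Sym2 V} : (none : Option V) ∉ Sym2.map some e := by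
  rw [Sym2.mem_map]
  rintro ⟨a, -, h⟩
  exact Option.some_ne_none a h

private lemma h2_edgeSet (G : SimpleGraph V) (x y z : V) :
    (henneberg2 G x y z).edgeSet =
      (Sym2.map some '' (G.edgeSet \ {s(x, y)})) ∪
      {s((none : Option V), some x), s(none, some y), s(none, some z)} := by
  rw [henneberg2, SimpleGraph.edgeSet_fromEdgeSet]
  ext e
  simp only [Set.mem_diff, Set.mem_union, Set.mem_setOf_eq, Set.mem_insert_iff,
    Set.mem_singleton_iff, Set.mem_image]
  constructor
  · rintro ⟨h | h, -⟩
    · obtain ⟨a, b, hab, hne, rfl⟩ := h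
      exact Or.inl ⟨s(a, b), ⟨hab, hne⟩, rfl⟩
    · exact Or.inr h
  · rintro (⟨e', he', rfl⟩ | h)
    · obtain ⟨he'E, he'ne⟩ := he'
      refine ⟨?_, ?_⟩
      · induction e' using Sym2.ind with
        | _ a b =>
          exact Or.inl ⟨a, b, he'E, he'ne, by rw [Sym2.map_pair_eq]⟩
      · intro hd
        induction e' using Sym2.ind with
        | _ a b =>
          rw [Sym2.map_pair_eq, Sym2.mem_diagSet, Sym2.mk_isDiag_iff] at hd
          exact (G.ne_of_adj he'E) (Option.some_injective V hd)
    · refine ⟨Or.inr h, ?_⟩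
      rcases h with rfl | rfl | rfl <;> simp [Sym2.mk_isDiag_iff]

theorem henneberg2_circuit [Fintype V] (G : SimpleGraph V) (hG : IsCircuit G)
    (x y z : V) (hxy : G.Adj x y) (hzx : z ≠ x) (hzy : z ≠ y) :
    IsCircuit (henneberg2 G x y z) := by
  classical
  obtain ⟨hE, hsparse⟩ := hG
  have hxyne : x ≠ y := G.ne_of_adj hxy
  have hn1 : 1 ≤ Fintype.card V := Fintype.card_pos_iff.mpr ⟨x⟩
  have hEcard : G.edgeSet.ncard = 2 * Fintype.card V - 1 := by omega
  have hES := h2_edgeSet G x y z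
  set e₀ : Sym2 V := s(x, y) with he₀
  set T : Set (Sym2 (Option V)) :=
    {s((none : Option V), some x), s(none, some y), s(none, some z)} with hT
  have hTnone : ∀ e ∈ T, (none : Option V) ∈ e := by
    intro e he; rcases he with rfl | rfl | rfl <;> simp
  have hdisj : Disjoint (Sym2.map some '' (G.edgeSet \ {e₀})) T := by
    rw [Set.disjoint_left]
    rintro e ⟨e', -, rfl⟩ heT
    exact none_not_mem_map (hTnone _ heT)
  have hTcard : T.ncard = 3 := by
    rw [hT]
    rw [Set.ncard_insert_of_notMem (by simp [Sym2.eq_iff, hxyne, hzx.symm, hzy.symm]),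
      Set.ncard_insert_of_notMem (by simp [Sym2.eq_iff, hzy.symm]), Set.ncard_singleton]
  have he₀E : e₀ ∈ G.edgeSet := hxy
  constructor
  · -- edge count
    rw [hES, Set.ncard_union_eq hdisj (Set.toFinite _) (Set.toFinite _),
      Set.ncard_image_of_injective _ sym2_some_inj,
      Set.ncard_diff_singleton_of_mem he₀E, hTcard, hEcard,
      Fintype.card_option]
    push_cast
    omega
  · -- sparsity
    intro X hX
    set Xs : Set V := some ⁻¹' (↑X : Set (Option V)) with hXs
    have hXsfin : Xs.Finite := Set.toFinite _
    set X' : Finset V := hXsfin.toFinset with hX'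
    have hX'coe : (↑X' : Set V) = Xs := hXsfin.coe_toFinset
    have hX'card : X'.card = Xs.ncard := (Set.ncard_eq_toFinset_card Xs hXsfin).symm
    -- split the induced edge set
    have hsplit : {e ∈ (henneberg2 G x y z).edgeSet | ∀ v ∈ e, v ∈ (↑X : Set (Option V))}
        = (Sym2.map some '' {e ∈ G.edgeSet \ {e₀} | ∀ v ∈ e, v ∈ Xs})
          ∪ {e ∈ T | ∀ v ∈ e, v ∈ (↑X : Set (Option V))} := by
      rw [hES]
      ext e
      simp only [Set.mem_union, Set.mem_setOf_eq, Set.mem_image]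
      constructor
      · rintro ⟨h | h, hp⟩
        · obtain ⟨e', he', rfl⟩ := h
          refine Or.inl ⟨e', ⟨he', fun v hv => ?_⟩, rfl⟩
          exact hp _ (Sym2.mem_map.mpr ⟨v, hv, rfl⟩)
        · exact Or.inr ⟨h, hp⟩
      · rintro (⟨e', ⟨he', hp⟩, rfl⟩ | ⟨ht, hp⟩)
        · refine ⟨Or.inl ⟨e', he', rfl⟩, fun v hv => ?_⟩
          obtain ⟨a, ha, rfl⟩ := Sym2.mem_map.mp hv
          exact hp a ha
        · exact ⟨Or.inr ht, hp⟩
    have hdisj2 : Disjoint (Sym2.map some '' {e ∈ G.edgeSet \ {e₀} | ∀ v ∈ e, v ∈ Xs})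
        {e ∈ T | ∀ v ∈ e, v ∈ (↑X : Set (Option V))} :=
      hdisj.mono (Set.image_mono (Set.sep_subset _ _)) (Set.sep_subset _ _)
    have hcount : indEdges (henneberg2 G x y z) ↑X
        = {e ∈ G.edgeSet \ {e₀} | ∀ v ∈ e, v ∈ Xs}.ncard
          + {e ∈ T | ∀ v ∈ e, v ∈ (↑X : Set (Option V))}.ncard := by
      rw [indEdges, hsplit, Set.ncard_union_eq hdisj2 (Set.toFinite _) (Set.toFinite _),
        Set.ncard_image_of_injective _ sym2_some_inj]
    set A : Set (Sym2 V) := {e ∈ G.edgeSet | ∀ v ∈ e, v ∈ Xs} with hA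
    have hAs : {e ∈ G.edgeSet \ {e₀} | ∀ v ∈ e, v ∈ Xs} = A \ {e₀} := by
      ext e
      simp only [hA, Set.mem_diff, Set.mem_setOf_eq, Set.mem_singleton_iff]
      tauto
    have hAind : indEdges G ↑X' = A.ncard := by rw [indEdges, hX'coe]
    -- the T part
    set B : Set (Sym2 (Option V)) := {e ∈ T | ∀ v ∈ e, v ∈ (↑X : Set (Option V))} with hB
    by_cases hnone : none ∈ X
    · -- Case B : none ∈ X
      have hBeq : B = (fun w => s((none : Option V), some w)) '' {w ∈ ({x, y, z} : Set V) | w ∈ Xs} := by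
        ext e
        simp only [hB, hT, Set.mem_setOf_eq, Set.mem_insert_iff, Set.mem_singleton_iff,
          Set.mem_image]
        constructor
        · rintro ⟨(rfl | rfl | rfl), hp⟩
          · exact ⟨x, ⟨Or.inl rfl, hp (some x) (by simp)⟩, rfl⟩
          · exact ⟨y, ⟨Or.inr (Or.inl rfl), hp (some y) (by simp)⟩, rfl⟩
          · exact ⟨z, ⟨Or.inr (Or.inr rfl), hp (some z) (by simp)⟩, rfl⟩
        · rintro ⟨w, ⟨hw, hwX⟩, rfl⟩
          refine ⟨by rcases hw with rfl | rfl | rfl <;> simp, ?_⟩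
          intro v hv
          rw [Sym2.mem_iff] at hv
          rcases hv with rfl | rfl
          · exact hnone
          · exact hwX
      have hginj : Function.Injective (fun w : V => s((none : Option V), some w)) := by
        intro w w' h
        simp only [Sym2.eq_iff] at h
        rcases h with ⟨-, h⟩ | ⟨h, -⟩
        · exact Option.some_injective V h
        · exact absurd h (by simp)
      have hBcard : B.ncard = {w ∈ ({x, y, z} : Set V) | w ∈ Xs}.ncard := by
        rw [hBeq, Set.ncard_image_of_injective _ hginj]
      -- X' is proper
      obtain ⟨o, -, hoX⟩ := Finset.exists_of_ssubset hX
      obtain ⟨w, rfl⟩ : ∃ w, o = some w := by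
        cases o with
        | none => exact absurd hnone hoX
        | some w => exact ⟨w, rfl⟩
      have hwXs : w ∉ Xs := by simpa [hXs] using hoX
      have hX'proper : X' ⊂ Finset.univ := by
        rw [Finset.ssubset_univ_iff]
        intro h
        apply hwXs
        rw [← hX'coe, h]
        simp
      have hAle : A.ncard ≤ 2 * X'.card - 2 := hAind ▸ hsparse X' hX'proper
      -- card relation
      have hXcard : X.card = Xs.ncard + 1 := by
        have hXdecomp : (↑X : Set (Option V)) = insert none (some '' Xs) := by
          ext o
          cases o with
          | none => simp [hnone]
          | some v => simp [hXs]
        rw [← Set.ncard_coe_finset, hXdecomp,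
          Set.ncard_insert_of_notMem (by simp) (Set.toFinite _),
          Set.ncard_image_of_injective _ (Option.some_injective V)]
      by_cases hxyXs : x ∈ Xs ∧ y ∈ Xs
      · -- both endpoints in X'
        have he₀A : e₀ ∈ A := by
          refine ⟨he₀E, ?_⟩
          intro v hv
          rw [he₀, Sym2.mem_iff] at hv
          rcases hv with rfl | rfl
          · exact hxyXs.1
          · exact hxyXs.2
        have ha : {e ∈ G.edgeSet \ {e₀} | ∀ v ∈ e, v ∈ Xs}.ncard = A.ncard - 1 := by
          rw [hAs, Set.ncard_diff_singleton_of_mem he₀A]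
        have hA1 : 0 < A.ncard := (Set.ncard_pos (Set.toFinite _)).mpr ⟨e₀, he₀A⟩
        have hble : B.ncard ≤ 3 := by
          rw [hBcard]
          calc {w ∈ ({x, y, z} : Set V) | w ∈ Xs}.ncard
              ≤ ({x, y, z} : Set V).ncard := Set.ncard_le_ncard (Set.sep_subset _ _) (Set.toFinite _)
            _ ≤ 3 := by
                refine le_trans (Set.ncard_insert_le _ _) ?_
                have := Set.ncard_insert_le y ({z} : Set V)
                simp only [Set.ncard_singleton] at this ⊢
                omega
        rw [hcount, ha, hXcard, ← hX'card]
        omega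
      · -- not both endpoints
        have ha : {e ∈ G.edgeSet \ {e₀} | ∀ v ∈ e, v ∈ Xs}.ncard ≤ A.ncard := by
          rw [hAs]
          exact Set.ncard_le_ncard Set.diff_subset (Set.toFinite _)
        have hble2 : B.ncard ≤ 2 := by
          rw [hBcard]
          rcases not_and_or.mp hxyXs with hx | hy
          · calc {w ∈ ({x, y, z} : Set V) | w ∈ Xs}.ncard
                ≤ ({y, z} : Set V).ncard := by
                  refine Set.ncard_le_ncard ?_ (Set.toFinite _)
                  rintro w ⟨(rfl | rfl | rfl), hw⟩
                  · exact absurd hw hx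
                  · exact Or.inl rfl
                  · exact Or.inr rfl
              _ ≤ 2 := by
                  refine le_trans (Set.ncard_insert_le _ _) ?_
                  simp [Set.ncard_singleton]
          · calc {w ∈ ({x, y, z} : Set V) | w ∈ Xs}.ncard
                ≤ ({x, z} : Set V).ncard := by
                  refine Set.ncard_le_ncard ?_ (Set.toFinite _)
                  rintro w ⟨(rfl | rfl | rfl), hw⟩
                  · exact Or.inl rfl
                  · exact absurd hw hy
                  · exact Or.inr rfl
              _ ≤ 2 := by
                  refine le_trans (Set.ncard_insert_le _ _) ?_
                  simp [Set.ncard_singleton]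
        have hbleXs : B.ncard ≤ Xs.ncard := by
          rw [hBcard]
          exact Set.ncard_le_ncard (fun w hw => hw.2) hXsfin
        have hAle : A.ncard ≤ 2 * X'.card - 2 := hAind ▸ hsparse X' hX'proper
        rw [hcount, hXcard, ← hX'card] at *
        omega
    · -- Case A : none ∉ X
      have hBempty : B = ∅ := by
        rw [hB, Set.eq_empty_iff_forall_notMem]
        rintro e ⟨heT, hp⟩
        exact hnone (hp none (hTnone e heT))
      have hXdecomp : (↑X : Set (Option V)) = some '' Xs := by
        ext o
        cases o with
        | none => simp [hnone]
        | some v => simp [hXs]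
      have hXcard : X.card = Xs.ncard := by
        rw [← Set.ncard_coe_finset, hXdecomp,
          Set.ncard_image_of_injective _ (Option.some_injective V)]
      have ha : {e ∈ G.edgeSet \ {e₀} | ∀ v ∈ e, v ∈ Xs}.ncard ≤ A.ncard := by
        rw [hAs]
        exact Set.ncard_le_ncard Set.diff_subset (Set.toFinite _)
      by_cases hXu : X' = Finset.univ
      · -- Xs is everything
        have hXsu : Xs = Set.univ := by rw [← hX'coe, hXu]; simp
        have hAeq : A = G.edgeSet := by
          rw [hA, hXsu]
          ext e; simp
        have ha2 : {e ∈ G.edgeSet \ {e₀} | ∀ v ∈ e, v ∈ Xs}.ncard = G.edgeSet.ncard - 1 := by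
          rw [hAs, hAeq, Set.ncard_diff_singleton_of_mem he₀E]
        have hXsn : Xs.ncard = Fintype.card V := by
          rw [hXsu, Set.ncard_univ, Nat.card_eq_fintype_card]
        rw [hcount, hBempty, Set.ncard_empty, ha2, hXcard, hXsn, hEcard]
        omega
      · have hX'proper : X' ⊂ Finset.univ := Finset.ssubset_univ_iff.mpr hXu
        have hAle : A.ncard ≤ 2 * X'.card - 2 := hAind ▸ hsparse X' hX'proper
        rw [hcount, hBempty, Set.ncard_empty, hXcard, ← hX'card]
        omega
end

section
/- Let G=(V,E) and C ⊆ V be a set of vertices all of degree 3 in G such that G[C] is a cycle, where G is a circuit in the simple (2,2)-sparsity matroid that is not itself a cycle or a wheel. Then the complement C̄ = V∖C satisfies i(C̄) = 2|C̄| - 1, which contradicts the sparsity of G; hence no subset of degree-3 vertices of a circuit induces a cycle (unless G is a wheel). -/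
variable {V : Type*}

/-- `G` is a cycle graph: connected with every vertex of degree 2. -/
def IsCycleGraph (G : SimpleGraph V) : Prop :=
  G.Connected ∧ ∀ v : V, deg G v = 2

/-- `G` is a wheel: some hub is adjacent to all other vertices, and the rest induces
a cycle. -/
def IsWheel (G : SimpleGraph V) : Prop :=
  ∃ v : V, (∀ u : V, u ≠ v → G.Adj v u) ∧ IsCycleGraph (G.induce {x : V | x ≠ v})

/-- In a circuit that is not a cycle and not a wheel, no set of degree-3 vertices
can induce a cycle: the complement would induce `2|C̄| - 1` edges, contradicting
sparsity. -/
theorem no_degree_three_induced_cycle [Fintype V] [DecidableEq V]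
    (G : SimpleGraph V) (hG : IsCircuit G)
    (hcyc : ¬ IsCycleGraph G) (hwheel : ¬ IsWheel G)
    (C : Finset V) (hC3 : ∀ v ∈ C, deg G v = 3)
    (hCcyc : IsCycleGraph (G.induce {x : V | x ∈ C})) :
    False := by
  classical
  obtain ⟨hconn, hdeg2⟩ := hCcyc
  have hCne : C.Nonempty := by
    obtain ⟨⟨v, hv⟩⟩ := hconn.nonempty
    exact ⟨v, hv⟩
  -- deg as neighborFinset card
  have deg_eq : ∀ v : V, deg G v = (G.neighborFinset v).card := by
    intro v
    rw [deg, Set.ncard_eq_toFinset_card']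
    exact congrArg Finset.card (Set.toFinset_congr rfl)
  -- degree inside C is 2
  have hdegC : ∀ v ∈ C, ((G.neighborFinset v).filter (· ∈ C)).card = 2 := by
    intro v hv
    have h2 := hdeg2 ⟨v, hv⟩
    rw [deg, Set.ncard_eq_toFinset_card'] at h2
    rw [← h2]
    symm
    apply Finset.card_bij (fun (u : {x : V | x ∈ C}) _ => (u : V))
    · intro u hu
      simp only [Set.mem_toFinset, SimpleGraph.mem_neighborSet] at hu
      simp only [Finset.mem_filter, SimpleGraph.mem_neighborFinset]
      exact ⟨hu, u.2⟩
    · intro a _ b _ hab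
      exact Subtype.ext hab
    · intro u hu
      simp only [Finset.mem_filter, SimpleGraph.mem_neighborFinset] at hu
      refine ⟨⟨u, hu.2⟩, ?_, rfl⟩
      simp only [Set.mem_toFinset, SimpleGraph.mem_neighborSet]
      exact hu.1
  -- degree outside C is 1
  have hdegCc : ∀ v ∈ C, ((G.neighborFinset v).filter (· ∉ C)).card = 1 := by
    intro v hv
    have h3 : (G.neighborFinset v).card = 3 := by
      rw [← deg_eq, hC3 v hv]
    have hsplit := Finset.card_filter_add_card_filter_not
      (s := G.neighborFinset v) (p := fun u => u ∈ C)
    have h2 := hdegC v hv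
    omega
  -- number of edges inside C
  have hiC : (G.edgeFinset.filter fun e => ∀ v ∈ e, v ∈ C).card = C.card := by
    set H := G.induce {x : V | x ∈ C} with hH
    have hcard : Fintype.card {x : V | x ∈ C} = C.card := by
      simp [Fintype.card_subtype]
    have hdegH : ∀ x : {x : V | x ∈ C}, H.degree x = 2 := by
      intro x
      have h2 := hdeg2 x
      rw [deg, Set.ncard_eq_toFinset_card'] at h2
      rw [← h2]
      exact congrArg Finset.card (Set.toFinset_congr rfl)
    have hhs := SimpleGraph.sum_degrees_eq_twice_card_edges H
    simp only [hdegH, Finset.sum_const, Finset.card_univ, smul_eq_mul, hcard] at hhs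
    have hEH : H.edgeFinset.card = C.card := by omega
    rw [← hEH]
    symm
    apply Finset.card_bij (fun (e : Sym2 {x : V | x ∈ C}) _ => Sym2.map Subtype.val e)
    · intro e he
      revert he
      refine Sym2.inductionOn e fun x y => ?_
      intro he
      simp only [SimpleGraph.mem_edgeFinset, SimpleGraph.mem_edgeSet] at he
      simp only [Sym2.map_pair_eq, Finset.mem_filter, SimpleGraph.mem_edgeFinset,
        SimpleGraph.mem_edgeSet]
      refine ⟨he, ?_⟩
      intro v hv
      rw [Sym2.mem_iff] at hv
      rcases hv with h | h
      · rw [h]; exact x.2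
      · rw [h]; exact y.2
    · intro a _ b _ hab
      exact Sym2.map.injective Subtype.val_injective hab
    · intro e he
      simp only [Finset.mem_filter, SimpleGraph.mem_edgeFinset, SimpleGraph.mem_edgeSet] at he
      revert he
      refine Sym2.inductionOn e fun x y => ?_
      intro he
      obtain ⟨hadj, hmem⟩ := he
      have hx : x ∈ C := hmem x (Sym2.mem_mk_left x y)
      have hy : y ∈ C := hmem y (Sym2.mem_mk_right x y)
      refine ⟨s(⟨x, hx⟩, ⟨y, hy⟩), ?_, ?_⟩
      · simpa [hH, SimpleGraph.mem_edgeFinset, SimpleGraph.mem_edgeSet] using hadj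
      · simp [Sym2.map_pair_eq]
  -- number of mixed edges
  have hmix : (G.edgeFinset.filter fun e => ∃ a b, e = s(a, b) ∧ a ∈ C ∧ b ∉ C).card
      = C.card := by
    have hS : (C.sigma fun v => (G.neighborFinset v).filter (· ∉ C)).card = C.card := by
      rw [Finset.card_sigma]
      rw [Finset.sum_congr rfl fun v hv => hdegCc v hv]
      simp
    rw [← hS]
    symm
    apply Finset.card_bij (fun (p : Σ _ : V, V) _ => s(p.1, p.2))
    · intro p hp
      simp only [Finset.mem_sigma, Finset.mem_filter, SimpleGraph.mem_neighborFinset] at hp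
      simp only [Finset.mem_filter, SimpleGraph.mem_edgeFinset, SimpleGraph.mem_edgeSet]
      exact ⟨hp.2.1, p.1, p.2, rfl, hp.1, hp.2.2⟩
    · intro p hp q hq hpq
      simp only [Finset.mem_sigma, Finset.mem_filter, SimpleGraph.mem_neighborFinset] at hp hq
      obtain ⟨p1, p2⟩ := p
      obtain ⟨q1, q2⟩ := q
      simp only [Sym2.eq_iff] at hpq
      simp only at hp hq
      rcases hpq with ⟨h1, h2⟩ | ⟨h1, h2⟩
      · subst h1; subst h2; rfl
      · exfalso; exact hq.2.2 (h1 ▸ hp.1)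
    · intro e he
      simp only [Finset.mem_filter, SimpleGraph.mem_edgeFinset, SimpleGraph.mem_edgeSet] at he
      obtain ⟨hadj, a, b, hab, haC, hbC⟩ := he
      refine ⟨⟨a, b⟩, ?_, hab.symm⟩
      simp only [Finset.mem_sigma, Finset.mem_filter, SimpleGraph.mem_neighborFinset]
      rw [hab, SimpleGraph.mem_edgeSet] at hadj
      exact ⟨haC, hadj, hbC⟩
  -- indEdges as filter
  have hind : ∀ X : Finset V,
      indEdges G ↑X = (G.edgeFinset.filter fun e => ∀ v ∈ e, v ∈ X).card := by
    intro X
    rw [indEdges, Set.ncard_eq_toFinset_card']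
    congr 1
    ext e
    simp [SimpleGraph.mem_edgeFinset]
  -- partition of the edge set
  have hpart : G.edgeFinset.card
      = (G.edgeFinset.filter fun e => ∀ v ∈ e, v ∈ C).card
      + (G.edgeFinset.filter fun e => ∃ a b, e = s(a, b) ∧ a ∈ C ∧ b ∉ C).card
      + indEdges G ↑(Cᶜ) := by
    rw [hind]
    have hcoe : (G.edgeFinset.filter fun e => ∀ v ∈ e, v ∈ Cᶜ)
        = G.edgeFinset.filter fun e => ∀ v ∈ e, v ∉ C := by
      apply Finset.filter_congr
      intro e _
      simp [Finset.mem_compl]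
    rw [hcoe]
    have key : ∀ e ∈ G.edgeFinset,
        ((∀ v ∈ e, v ∈ C) ∨ (∃ a b, e = s(a, b) ∧ a ∈ C ∧ b ∉ C) ∨ (∀ v ∈ e, v ∉ C))
        ∧ ¬((∀ v ∈ e, v ∈ C) ∧ (∃ a b, e = s(a, b) ∧ a ∈ C ∧ b ∉ C))
        ∧ ¬((∀ v ∈ e, v ∈ C) ∧ (∀ v ∈ e, v ∉ C))
        ∧ ¬((∃ a b, e = s(a, b) ∧ a ∈ C ∧ b ∉ C) ∧ (∀ v ∈ e, v ∉ C)) := by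
      intro e
      refine Sym2.inductionOn e fun x y => ?_
      intro _
      simp only [Sym2.mem_iff]
      by_cases hx : x ∈ C <;> by_cases hy : y ∈ C
      · refine ⟨Or.inl ?_, ?_, ?_, ?_⟩
        · rintro v (rfl | rfl) <;> assumption
        · rintro ⟨_, a, b, hab, haC, hbC⟩
          rw [Sym2.eq_iff] at hab
          rcases hab with ⟨rfl, rfl⟩ | ⟨rfl, rfl⟩ <;> exact hbC (by assumption)
        · rintro ⟨h1, h2⟩
          exact h2 x (Or.inl rfl) hx
        · rintro ⟨⟨a, b, hab, haC, hbC⟩, h2⟩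
          rw [Sym2.eq_iff] at hab
          rcases hab with ⟨h1', h2'⟩ | ⟨h1', h2'⟩
          · exact h2 x (Or.inl rfl) (by rwa [← h1'] at haC)
          · exact h2 y (Or.inr rfl) (by rwa [← h2'] at haC)
      · refine ⟨Or.inr (Or.inl ⟨x, y, rfl, hx, hy⟩), ?_, ?_, ?_⟩
        · rintro ⟨h1, _⟩; exact hy (h1 y (Or.inr rfl))
        · rintro ⟨h1, h2⟩; exact h2 x (Or.inl rfl) hx
        · rintro ⟨_, h2⟩; exact h2 x (Or.inl rfl) hx
      · refine ⟨Or.inr (Or.inl ⟨y, x, Sym2.eq_swap, hy, hx⟩), ?_, ?_, ?_⟩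
        · rintro ⟨h1, _⟩; exact hx (h1 x (Or.inl rfl))
        · rintro ⟨h1, h2⟩; exact h2 y (Or.inr rfl) hy
        · rintro ⟨_, h2⟩; exact h2 y (Or.inr rfl) hy
      · refine ⟨Or.inr (Or.inr ?_), ?_, ?_, ?_⟩
        · rintro v (rfl | rfl) <;> assumption
        · rintro ⟨h1, _⟩; exact hx (h1 x (Or.inl rfl))
        · rintro ⟨h1, _⟩; exact hx (h1 x (Or.inl rfl))
        · rintro ⟨⟨a, b, hab, haC, hbC⟩, _⟩
          rw [Sym2.eq_iff] at hab
          rcases hab with ⟨rfl, rfl⟩ | ⟨rfl, rfl⟩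
          · exact hx haC
          · exact hy haC
    have e1 := Finset.card_filter_add_card_filter_not
      (s := G.edgeFinset) (p := fun e => ∀ v ∈ e, v ∈ C)
    have e2 := Finset.card_filter_add_card_filter_not
      (s := G.edgeFinset.filter fun e => ¬∀ v ∈ e, v ∈ C)
      (p := fun e => ∃ a b, e = s(a, b) ∧ a ∈ C ∧ b ∉ C)
    rw [Finset.filter_filter, Finset.filter_filter] at e2
    have e3 : (G.edgeFinset.filter fun e =>
        (¬∀ v ∈ e, v ∈ C) ∧ ∃ a b, e = s(a, b) ∧ a ∈ C ∧ b ∉ C)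
        = G.edgeFinset.filter fun e => ∃ a b, e = s(a, b) ∧ a ∈ C ∧ b ∉ C := by
      apply Finset.filter_congr
      intro e he
      have hk := key e he
      constructor
      · rintro ⟨_, h⟩; exact h
      · intro h; exact ⟨fun h1 => hk.2.1 ⟨h1, h⟩, h⟩
    have e4 : (G.edgeFinset.filter fun e =>
        (¬∀ v ∈ e, v ∈ C) ∧ ¬∃ a b, e = s(a, b) ∧ a ∈ C ∧ b ∉ C)
        = G.edgeFinset.filter fun e => ∀ v ∈ e, v ∉ C := by
      apply Finset.filter_congr
      intro e he
      have hk := key e he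
      constructor
      · rintro ⟨h1, h2⟩
        rcases hk.1 with h | h | h
        · exact absurd h h1
        · exact absurd h h2
        · exact h
      · intro h
        exact ⟨fun h1 => hk.2.2.1 ⟨h1, h⟩, fun h2 => hk.2.2.2 ⟨h2, h⟩⟩
    rw [e3, e4] at e2
    omega
  -- global edge count
  have hE : (G.edgeFinset.card : ℤ) = 2 * Fintype.card V - 1 := by
    have h := hG.1
    rwa [← SimpleGraph.coe_edgeFinset, Set.ncard_coe_finset] at h
  have hn : C.card + Cᶜ.card = Fintype.card V := Finset.card_add_card_compl C
  -- sparsity applied to the complement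
  have hss : Cᶜ ⊂ Finset.univ := by
    rw [Finset.ssubset_univ_iff]
    intro h
    obtain ⟨v, hv⟩ := hCne
    have hvc : v ∈ Cᶜ := h ▸ Finset.mem_univ v
    exact (Finset.mem_compl.mp hvc) hv
  have hsp := hG.2 Cᶜ hss
  rw [hiC, hmix] at hpart
  omega
end

section
/- Let G₁=(V₁,E₁) and G₂=(V₂,E₂) be vertex-disjoint circuits in the simple (2,2)-sparsity matroid such that each Gᵢ contains a 2-vertex cut {aᵢ,bᵢ} with one side inducing a copy of K4 on aᵢ,bᵢ,cᵢ,dᵢ. Then the 2-sum G₁ ⊕₂ G₂, obtained by deleting cᵢ, dᵢ from each Gᵢ, identifying a₁ with a₂ and b₁ with b₂, and keeping a single copy of the edge ab, is a circuit in the simple (2,2)-sparsity matroid. -/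
variable {V : Type*}

section TwoSumAux

variable {V : Type*}

lemma ncard5' {a b c d : V} (hab : a ≠ b) (hac : a ≠ c) (had : a ≠ d)
    (hbc : b ≠ c) (hbd : b ≠ d) (hcd : c ≠ d) :
    ({s(a,c), s(a,d), s(b,c), s(b,d), s(c,d)} : Set (Sym2 V)).ncard = 5 := by
  rw [Set.ncard_insert_of_notMem (by simp [Sym2.eq_iff]; tauto)
      (((((Set.finite_singleton _).insert _).insert _).insert _)),
    Set.ncard_insert_of_notMem (by simp [Sym2.eq_iff]; tauto)
      ((((Set.finite_singleton _).insert _).insert _)),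
    Set.ncard_insert_of_notMem (by simp [Sym2.eq_iff]; tauto)
      (((Set.finite_singleton _).insert _)),
    Set.ncard_insert_of_notMem (by simp [Sym2.eq_iff]; tauto)
      ((Set.finite_singleton _)),
    Set.ncard_singleton]

lemma ncard6' {a b c d : V} (hab : a ≠ b) (hac : a ≠ c) (had : a ≠ d)
    (hbc : b ≠ c) (hbd : b ≠ d) (hcd : c ≠ d) :
    ({s(a,b), s(a,c), s(a,d), s(b,c), s(b,d), s(c,d)} : Set (Sym2 V)).ncard = 6 := by
  rw [Set.ncard_insert_of_notMem (by simp [Sym2.eq_iff]; tauto)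
      ((((((Set.finite_singleton _).insert _).insert _).insert _)).insert _),
    ncard5' hab hac had hbc hbd hcd]

lemma ncard_pairSet' {α β : Type*} {R : α → α → Prop} {g : α → β}
    (hg : Function.Injective g) :
    {e : Sym2 β | ∃ x y, R x y ∧ e = s(g x, g y)}.ncard
      = {e : Sym2 α | ∃ x y, R x y ∧ e = s(x, y)}.ncard := by
  have himg : {e : Sym2 β | ∃ x y, R x y ∧ e = s(g x, g y)}
      = Sym2.map g '' {e : Sym2 α | ∃ x y, R x y ∧ e = s(x, y)} := by
    ext e
    constructor
    · rintro ⟨x, y, hR, rfl⟩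
      exact ⟨s(x, y), ⟨x, y, hR, rfl⟩, by simp⟩
    · rintro ⟨e', ⟨x, y, hR, rfl⟩, rfl⟩
      exact ⟨x, y, hR, by simp⟩
  rw [himg, Set.ncard_image_of_injOn (Sym2.map.injective hg).injOn]

lemma ncard_exists_eq' {α β : Type*} {P : α → Prop} {g : α → β}
    (hg : Set.InjOn g {y | P y}) :
    {e : β | ∃ y, P y ∧ e = g y}.ncard = {y | P y}.ncard := by
  have h : {e : β | ∃ y, P y ∧ e = g y} = g '' {y | P y} := by
    ext e; simp only [Set.mem_image, Set.mem_setOf_eq]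
    constructor
    · rintro ⟨y, h, rfl⟩; exact ⟨y, h, rfl⟩
    · rintro ⟨y, h, rfl⟩; exact ⟨y, h, rfl⟩
  rw [h, Set.ncard_image_of_injOn hg]

lemma ncard_union4_le' {α : Type*} [Finite α] (A B C D : Set α) :
    (A ∪ (B ∪ (C ∪ D))).ncard ≤ A.ncard + B.ncard + C.ncard + D.ncard :=
  (Set.ncard_union_le _ _).trans <| by
    have h1 := (Set.ncard_union_le B (C ∪ D)).trans
      (add_le_add_right (Set.ncard_union_le C D) _)
    omega

lemma left_decomp' [DecidableEq V] (G : SimpleGraph V) {a b c d : V}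
    (hc : ∀ x : V, G.Adj c x → x ∈ ({a, b, d} : Finset V))
    (hd : ∀ x : V, G.Adj d x → x ∈ ({a, b, c} : Finset V))
    (l2 : G.Adj a c) (l3 : G.Adj a d) (l4 : G.Adj b c) (l5 : G.Adj b d) (l6 : G.Adj c d) :
    G.edgeSet = {e ∈ G.edgeSet | ∀ v ∈ e, v ∉ ({c, d} : Finset V)}
      ∪ {s(a,c), s(a,d), s(b,c), s(b,d), s(c,d)} := by
  ext e
  induction e using Sym2.ind with
  | _ u v =>
    simp only [Set.mem_union, Set.mem_setOf_eq, Set.mem_insert_iff, Set.mem_singleton_iff,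
      SimpleGraph.mem_edgeSet]
    constructor
    · intro hadj
      rcases em (u = c) with rfl | huc
      · have := hc v hadj; simp only [Finset.mem_insert, Finset.mem_singleton] at this
        rcases this with rfl | rfl | rfl <;> right <;> simp [Sym2.eq_iff]
      rcases em (u = d) with rfl | hud
      · have := hd v hadj; simp only [Finset.mem_insert, Finset.mem_singleton] at this
        rcases this with rfl | rfl | rfl <;> right <;> simp [Sym2.eq_iff]
      rcases em (v = c) with rfl | hvc
      · have := hc u hadj.symm; simp only [Finset.mem_insert, Finset.mem_singleton] at this
        rcases this with rfl | rfl | rfl <;> right <;> simp [Sym2.eq_iff]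
      rcases em (v = d) with rfl | hvd
      · have := hd u hadj.symm; simp only [Finset.mem_insert, Finset.mem_singleton] at this
        rcases this with rfl | rfl | rfl <;> right <;> simp [Sym2.eq_iff]
      · left
        refine ⟨hadj, ?_⟩
        rintro w hw
        rcases Sym2.mem_iff.mp hw with rfl | rfl <;> simp [huc, hud, hvc, hvd]
    · rintro (⟨h, -⟩ | h | h | h | h | h)
      · exact h
      all_goals rw [Sym2.eq_iff] at h
      all_goals rcases h with ⟨rfl, rfl⟩ | ⟨rfl, rfl⟩
      exacts [l2, l2.symm, l3, l3.symm, l4, l4.symm, l5, l5.symm, l6, l6.symm]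

lemma left_count' [Fintype V] [DecidableEq V] (G : SimpleGraph V) {a b c d : V}
    (hab : a ≠ b) (hac : a ≠ c) (had : a ≠ d) (hbc : b ≠ c) (hbd : b ≠ d) (hcd : c ≠ d)
    (hc : ∀ x : V, G.Adj c x → x ∈ ({a, b, d} : Finset V))
    (hd : ∀ x : V, G.Adj d x → x ∈ ({a, b, c} : Finset V))
    (l2 : G.Adj a c) (l3 : G.Adj a d) (l4 : G.Adj b c) (l5 : G.Adj b d) (l6 : G.Adj c d) :
    G.edgeSet.ncard = {e ∈ G.edgeSet | ∀ v ∈ e, v ∉ ({c, d} : Finset V)}.ncard + 5 := by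
  have h := congrArg Set.ncard (left_decomp' G hc hd l2 l3 l4 l5 l6)
  rw [Set.ncard_union_eq ?_ (Set.toFinite _) (Set.toFinite _),
    ncard5' hab hac had hbc hbd hcd] at h
  · exact h
  rw [Set.disjoint_right]
  intro e he
  simp only [Set.mem_insert_iff, Set.mem_singleton_iff] at he
  rintro ⟨-, hall⟩
  rcases he with rfl | rfl | rfl | rfl | rfl <;>
    [exact hall c (by simp) (by simp); exact hall d (by simp) (by simp);
     exact hall c (by simp) (by simp); exact hall d (by simp) (by simp);
     exact hall c (by simp) (by simp)]

lemma right_decomp' [DecidableEq V] (G : SimpleGraph V) {a b c d : V}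
    (hc : ∀ x : V, G.Adj c x → x ∈ ({a, b, d} : Finset V))
    (hd : ∀ x : V, G.Adj d x → x ∈ ({a, b, c} : Finset V))
    (k1 : G.Adj a b) (k2 : G.Adj a c) (k3 : G.Adj a d)
    (k4 : G.Adj b c) (k5 : G.Adj b d) (k6 : G.Adj c d) :
    G.edgeSet = {e ∈ G.edgeSet | ∀ v ∈ e, v ∉ ({a, b, c, d} : Finset V)}
      ∪ {s(a,b), s(a,c), s(a,d), s(b,c), s(b,d), s(c,d)}
      ∪ (fun v => s(a,v)) '' {v | G.Adj a v ∧ v ∉ ({a, b, c, d} : Finset V)}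
      ∪ (fun v => s(b,v)) '' {v | G.Adj b v ∧ v ∉ ({a, b, c, d} : Finset V)} := by
  ext e
  induction e using Sym2.ind with
  | _ u v =>
    simp only [Set.mem_union, Set.mem_setOf_eq, Set.mem_insert_iff, Set.mem_singleton_iff,
      SimpleGraph.mem_edgeSet, Set.mem_image]
    constructor
    · intro hadj
      rcases em (u = c) with rfl | huc
      · have := hc v hadj; simp only [Finset.mem_insert, Finset.mem_singleton] at this
        rcases this with rfl | rfl | rfl <;> (left; left; right; simp [Sym2.eq_iff])
      rcases em (u = d) with rfl | hud
      · have := hd v hadj; simp only [Finset.mem_insert, Finset.mem_singleton] at this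
        rcases this with rfl | rfl | rfl <;> (left; left; right; simp [Sym2.eq_iff])
      rcases em (v = c) with rfl | hvc
      · have := hc u hadj.symm; simp only [Finset.mem_insert, Finset.mem_singleton] at this
        rcases this with rfl | rfl | rfl <;> (left; left; right; simp [Sym2.eq_iff])
      rcases em (v = d) with rfl | hvd
      · have := hd u hadj.symm; simp only [Finset.mem_insert, Finset.mem_singleton] at this
        rcases this with rfl | rfl | rfl <;> (left; left; right; simp [Sym2.eq_iff])
      rcases em (u = a) with rfl | hua
      · rcases em (v = b) with rfl | hvb
        · left; left; right; simp
        · left; right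
          exact ⟨v, ⟨hadj, by simp [hadj.ne', hvb, hvc, hvd]⟩, rfl⟩
      rcases em (u = b) with rfl | hub
      · rcases em (v = a) with rfl | hva
        · left; left; right; simp [Sym2.eq_iff]
        · right
          exact ⟨v, ⟨hadj, by simp [hva, hadj.ne', hvc, hvd]⟩, rfl⟩
      rcases em (v = a) with rfl | hva
      · left; right
        exact ⟨u, ⟨hadj.symm, by simp [hadj.ne, hub, huc, hud]⟩, Sym2.eq_swap⟩
      rcases em (v = b) with rfl | hvb
      · right
        exact ⟨u, ⟨hadj.symm, by simp [hua, hadj.ne, huc, hud]⟩, Sym2.eq_swap⟩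
      · left; left; left
        refine ⟨hadj, ?_⟩
        rintro w hw
        rcases Sym2.mem_iff.mp hw with rfl | rfl <;> simp [hua, hub, huc, hud, hva, hvb, hvc, hvd]
    · rintro (((⟨h, -⟩ | (h | h | h | h | h | h)) | ⟨w, ⟨hadj, -⟩, h⟩) | ⟨w, ⟨hadj, -⟩, h⟩)
      · exact h
      all_goals rw [Sym2.eq_iff] at h
      all_goals rcases h with ⟨rfl, rfl⟩ | ⟨rfl, rfl⟩
      exacts [k1, k1.symm, k2, k2.symm, k3, k3.symm, k4, k4.symm, k5, k5.symm, k6, k6.symm,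
        hadj, hadj.symm, hadj, hadj.symm]

lemma right_count' [Fintype V] [DecidableEq V] (G : SimpleGraph V) {a b c d : V}
    (hab : a ≠ b) (hac : a ≠ c) (had : a ≠ d) (hbc : b ≠ c) (hbd : b ≠ d) (hcd : c ≠ d)
    (hc : ∀ x : V, G.Adj c x → x ∈ ({a, b, d} : Finset V))
    (hd : ∀ x : V, G.Adj d x → x ∈ ({a, b, c} : Finset V))
    (k1 : G.Adj a b) (k2 : G.Adj a c) (k3 : G.Adj a d)
    (k4 : G.Adj b c) (k5 : G.Adj b d) (k6 : G.Adj c d) :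
    G.edgeSet.ncard = {e ∈ G.edgeSet | ∀ v ∈ e, v ∉ ({a, b, c, d} : Finset V)}.ncard + 6
      + ((fun v => s(a,v)) '' {v | G.Adj a v ∧ v ∉ ({a, b, c, d} : Finset V)}).ncard
      + ((fun v => s(b,v)) '' {v | G.Adj b v ∧ v ∉ ({a, b, c, d} : Finset V)}).ncard := by
  have h := congrArg Set.ncard (right_decomp' G hc hd k1 k2 k3 k4 k5 k6)
  have dAF : Disjoint {e ∈ G.edgeSet | ∀ v ∈ e, v ∉ ({a, b, c, d} : Finset V)}
      ({s(a,b), s(a,c), s(a,d), s(b,c), s(b,d), s(c,d)} : Set (Sym2 V)) := by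
    rw [Set.disjoint_right]
    intro e he
    simp only [Set.mem_insert_iff, Set.mem_singleton_iff] at he
    rintro ⟨-, hall⟩
    rcases he with rfl | rfl | rfl | rfl | rfl | rfl <;>
      [exact hall a (by simp) (by simp); exact hall a (by simp) (by simp);
       exact hall a (by simp) (by simp); exact hall b (by simp) (by simp);
       exact hall b (by simp) (by simp); exact hall c (by simp) (by simp)]
  have dACa : Disjoint {e ∈ G.edgeSet | ∀ v ∈ e, v ∉ ({a, b, c, d} : Finset V)}
      ((fun v => s(a,v)) '' {v | G.Adj a v ∧ v ∉ ({a, b, c, d} : Finset V)}) := by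
    rw [Set.disjoint_right]
    rintro e ⟨w, -, rfl⟩ ⟨-, hall⟩
    exact hall a (by simp) (by simp)
  have dACb : Disjoint {e ∈ G.edgeSet | ∀ v ∈ e, v ∉ ({a, b, c, d} : Finset V)}
      ((fun v => s(b,v)) '' {v | G.Adj b v ∧ v ∉ ({a, b, c, d} : Finset V)}) := by
    rw [Set.disjoint_right]
    rintro e ⟨w, -, rfl⟩ ⟨-, hall⟩
    exact hall b (by simp) (by simp)
  have dFCa : Disjoint ({s(a,b), s(a,c), s(a,d), s(b,c), s(b,d), s(c,d)} : Set (Sym2 V))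
      ((fun v => s(a,v)) '' {v | G.Adj a v ∧ v ∉ ({a, b, c, d} : Finset V)}) := by
    rw [Set.disjoint_right]
    rintro e ⟨w, ⟨-, hw⟩, rfl⟩ he
    simp only [Finset.mem_insert, Finset.mem_singleton, not_or] at hw
    simp only [Set.mem_insert_iff, Set.mem_singleton_iff, Sym2.eq_iff] at he
    tauto
  have dFCb : Disjoint ({s(a,b), s(a,c), s(a,d), s(b,c), s(b,d), s(c,d)} : Set (Sym2 V))
      ((fun v => s(b,v)) '' {v | G.Adj b v ∧ v ∉ ({a, b, c, d} : Finset V)}) := by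
    rw [Set.disjoint_right]
    rintro e ⟨w, ⟨-, hw⟩, rfl⟩ he
    simp only [Finset.mem_insert, Finset.mem_singleton, not_or] at hw
    simp only [Set.mem_insert_iff, Set.mem_singleton_iff, Sym2.eq_iff] at he
    tauto
  have dCaCb : Disjoint ((fun v => s(a,v)) '' {v | G.Adj a v ∧ v ∉ ({a, b, c, d} : Finset V)})
      ((fun v => s(b,v)) '' {v | G.Adj b v ∧ v ∉ ({a, b, c, d} : Finset V)}) := by
    rw [Set.disjoint_right]
    rintro e ⟨w, ⟨-, hw⟩, rfl⟩ ⟨w', ⟨-, hw'⟩, he⟩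
    simp only [Finset.mem_insert, Finset.mem_singleton, not_or] at hw hw'
    rw [Sym2.eq_iff] at he
    tauto
  rw [Set.ncard_union_eq
        (Set.disjoint_union_left.mpr ⟨Set.disjoint_union_left.mpr ⟨dACb, dFCb⟩, dCaCb⟩)
        (Set.toFinite _) (Set.toFinite _),
      Set.ncard_union_eq (Set.disjoint_union_left.mpr ⟨dACa, dFCa⟩)
        (Set.toFinite _) (Set.toFinite _),
      Set.ncard_union_eq dAF (Set.toFinite _) (Set.toFinite _),
      ncard6' hab hac had hbc hbd hcd] at h
  exact h

lemma improved' [Fintype V] [DecidableEq V] {G : SimpleGraph V} (h : IsCircuit G)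
    {a b c d : V} (hab : a ≠ b) (hac : a ≠ c) (had : a ≠ d)
    (hbc : b ≠ c) (hbd : b ≠ d) (hcd : c ≠ d)
    (l2 : G.Adj a c) (l3 : G.Adj a d) (l4 : G.Adj b c) (l5 : G.Adj b d) (l6 : G.Adj c d)
    {Y : Finset V} (ha : a ∈ Y) (hb : b ∈ Y) (hc : c ∉ Y) (hd : d ∉ Y)
    (hproper : insert c (insert d Y) ⊂ Finset.univ) :
    indEdges G ↑Y + 3 ≤ 2 * Y.card := by
  have hcard : (insert c (insert d Y)).card = Y.card + 2 := by
    rw [Finset.card_insert_of_notMem (by simp [hcd, hc]), Finset.card_insert_of_notMem hd]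
  have hb2 := h.2 _ hproper
  rw [hcard] at hb2
  have key : indEdges G ↑Y + 5 ≤ indEdges G ↑(insert c (insert d Y)) := by
    set F : Set (Sym2 V) := {s(a,c), s(a,d), s(b,c), s(b,d), s(c,d)} with hF
    have hFfin : F.Finite := ((((Set.finite_singleton _).insert _).insert _).insert _).insert _
    have hsub : {e ∈ G.edgeSet | ∀ v ∈ e, v ∈ (↑Y : Set V)} ∪ F ⊆
        {e ∈ G.edgeSet | ∀ v ∈ e, v ∈ (↑(insert c (insert d Y)) : Set V)} := by
      rintro e (⟨he, hall⟩ | he)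
      · exact ⟨he, fun v hv => by simp [hall v hv]⟩
      · simp only [hF, Set.mem_insert_iff, Set.mem_singleton_iff] at he
        rcases he with rfl | rfl | rfl | rfl | rfl <;>
          refine ⟨by assumption, ?_⟩ <;>
          simp only [Sym2.mem_iff, Finset.coe_insert, Set.mem_insert_iff, Finset.mem_coe] <;>
          rintro v (rfl | rfl) <;> simp [ha, hb, hc, hd]
    have hdisj : Disjoint {e ∈ G.edgeSet | ∀ v ∈ e, v ∈ (↑Y : Set V)} F := by
      rw [Set.disjoint_right]
      intro e he
      simp only [hF, Set.mem_insert_iff, Set.mem_singleton_iff] at he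
      rintro ⟨-, hall⟩
      rcases he with rfl | rfl | rfl | rfl | rfl
      · exact hc (hall c (by simp))
      · exact hd (hall d (by simp))
      · exact hc (hall c (by simp))
      · exact hd (hall d (by simp))
      · exact hc (hall c (by simp))
    have hle := Set.ncard_le_ncard hsub (Set.toFinite _)
    rw [Set.ncard_union_eq hdisj (Set.toFinite _) hFfin,
      ncard5' hab hac had hbc hbd hcd] at hle
    exact hle
  unfold indEdges at *
  omega

lemma right_bound11' [Fintype V] (G : SimpleGraph V) {a b : V}
    (hab : a ≠ b) (hAdj : G.Adj a b) (Y : Set V) (haY : a ∉ Y) (hbY : b ∉ Y) :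
    {e ∈ G.edgeSet | ∀ v ∈ e, v ∈ Y}.ncard
      + ((fun v => s(a,v)) '' {v | G.Adj a v ∧ v ∈ Y}).ncard
      + ((fun v => s(b,v)) '' {v | G.Adj b v ∧ v ∈ Y}).ncard
      + 1 ≤ indEdges G (insert a (insert b Y)) := by
  have hsub : {e ∈ G.edgeSet | ∀ v ∈ e, v ∈ Y}
      ∪ (fun v => s(a,v)) '' {v | G.Adj a v ∧ v ∈ Y}
      ∪ (fun v => s(b,v)) '' {v | G.Adj b v ∧ v ∈ Y}
      ∪ {s(a,b)} ⊆ {e ∈ G.edgeSet | ∀ v ∈ e, v ∈ insert a (insert b Y)} := by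
    rintro e (((⟨he, hall⟩ | ⟨w, ⟨hadj, hw⟩, rfl⟩) | ⟨w, ⟨hadj, hw⟩, rfl⟩) | rfl)
    · exact ⟨he, fun v hv => by simp [hall v hv]⟩
    · exact ⟨hadj, by rintro v hv; rcases Sym2.mem_iff.mp hv with rfl | rfl <;> simp [hw]⟩
    · exact ⟨hadj, by rintro v hv; rcases Sym2.mem_iff.mp hv with rfl | rfl <;> simp [hw]⟩
    · exact ⟨hAdj, by rintro v hv; rcases Sym2.mem_iff.mp hv with rfl | rfl <;> simp⟩
  have d1 : Disjoint {e ∈ G.edgeSet | ∀ v ∈ e, v ∈ Y}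
      ((fun v => s(a,v)) '' {v | G.Adj a v ∧ v ∈ Y}) := by
    rw [Set.disjoint_right]
    rintro e ⟨w, -, rfl⟩ ⟨-, hall⟩
    exact haY (hall a (by simp))
  have d2 : Disjoint {e ∈ G.edgeSet | ∀ v ∈ e, v ∈ Y}
      ((fun v => s(b,v)) '' {v | G.Adj b v ∧ v ∈ Y}) := by
    rw [Set.disjoint_right]
    rintro e ⟨w, -, rfl⟩ ⟨-, hall⟩
    exact hbY (hall b (by simp))
  have d3 : Disjoint ((fun v => s(a,v)) '' {v | G.Adj a v ∧ v ∈ Y})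
      ((fun v => s(b,v)) '' {v | G.Adj b v ∧ v ∈ Y}) := by
    rw [Set.disjoint_right]
    rintro e ⟨w, ⟨-, hw⟩, rfl⟩ ⟨w', ⟨-, hw'⟩, he⟩
    rw [Sym2.eq_iff] at he
    rcases he with ⟨h1, -⟩ | ⟨h1, -⟩
    · exact hab h1
    · exact haY (by rw [h1]; exact hw)
  have d4 : Disjoint ({e ∈ G.edgeSet | ∀ v ∈ e, v ∈ Y}
      ∪ (fun v => s(a,v)) '' {v | G.Adj a v ∧ v ∈ Y}
      ∪ (fun v => s(b,v)) '' {v | G.Adj b v ∧ v ∈ Y}) {s(a,b)} := by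
    rw [Set.disjoint_right]
    rintro e rfl h
    rcases h with ((⟨-, hall⟩ | ⟨w, ⟨-, hw⟩, he⟩) | ⟨w, ⟨-, hw⟩, he⟩)
    · exact haY (hall a (by simp))
    · rw [Sym2.eq_iff] at he
      rcases he with ⟨-, h2⟩ | ⟨h1, -⟩
      · exact hbY (h2 ▸ hw)
      · exact hab h1
    · rw [Sym2.eq_iff] at he
      rcases he with ⟨h1, -⟩ | ⟨-, h2⟩
      · exact hab h1.symm
      · exact haY (h2 ▸ hw)
  have hle := Set.ncard_le_ncard hsub (Set.toFinite _)
  rw [Set.ncard_union_eq d4 (Set.toFinite _) (Set.toFinite _),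
      Set.ncard_union_eq (Set.disjoint_union_left.mpr ⟨d2, d3⟩)
        (Set.toFinite _) (Set.toFinite _),
      Set.ncard_union_eq d1 (Set.toFinite _) (Set.toFinite _),
      Set.ncard_singleton] at hle
  exact hle

lemma right_bound10' [Fintype V] (G : SimpleGraph V) {a : V}
    (Y : Set V) (haY : a ∉ Y) :
    {e ∈ G.edgeSet | ∀ v ∈ e, v ∈ Y}.ncard
      + ((fun v => s(a,v)) '' {v | G.Adj a v ∧ v ∈ Y}).ncard
      ≤ indEdges G (insert a Y) := by
  have hsub : {e ∈ G.edgeSet | ∀ v ∈ e, v ∈ Y}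
      ∪ (fun v => s(a,v)) '' {v | G.Adj a v ∧ v ∈ Y}
      ⊆ {e ∈ G.edgeSet | ∀ v ∈ e, v ∈ insert a Y} := by
    rintro e (⟨he, hall⟩ | ⟨w, ⟨hadj, hw⟩, rfl⟩)
    · exact ⟨he, fun v hv => by simp [hall v hv]⟩
    · exact ⟨hadj, by rintro v hv; rcases Sym2.mem_iff.mp hv with rfl | rfl <;> simp [hw]⟩
  have d1 : Disjoint {e ∈ G.edgeSet | ∀ v ∈ e, v ∈ Y}
      ((fun v => s(a,v)) '' {v | G.Adj a v ∧ v ∈ Y}) := by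
    rw [Set.disjoint_right]
    rintro e ⟨w, -, rfl⟩ ⟨-, hall⟩
    exact haY (hall a (by simp))
  have hle := Set.ncard_le_ncard hsub (Set.toFinite _)
  rw [Set.ncard_union_eq d1 (Set.toFinite _) (Set.toFinite _)] at hle
  exact hle

end TwoSumAux

/-- The 2-sum: delete `c₁, d₁` from `G₁` and `c₂, d₂` from `G₂`, identify `a₁` with
`a₂` and `b₁` with `b₂`, keeping a single copy of the edge `ab`. -/
theorem two_sum_circuit {V₁ V₂ : Type*} [Fintype V₁] [Fintype V₂]
    [DecidableEq V₁] [DecidableEq V₂]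
    (G₁ : SimpleGraph V₁) (G₂ : SimpleGraph V₂)
    (h₁ : IsCircuit G₁) (h₂ : IsCircuit G₂)
    (a₁ b₁ c₁ d₁ : V₁) (a₂ b₂ c₂ d₂ : V₂)
    -- `a₁, b₁, c₁, d₁` are distinct and induce a copy of `K₄` in `G₁`
    (g12 : a₁ ≠ b₁) (ga₁ : a₁ ∉ ({c₁, d₁} : Finset V₁)) (gb₁ : b₁ ∉ ({c₁, d₁} : Finset V₁))
    (g34 : c₁ ≠ d₁)
    (l1 : G₁.Adj a₁ b₁) (l2 : G₁.Adj a₁ c₁) (l3 : G₁.Adj a₁ d₁)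
    (l4 : G₁.Adj b₁ c₁) (l5 : G₁.Adj b₁ d₁) (l6 : G₁.Adj c₁ d₁)
    -- `{a₁, b₁}` is a 2-vertex cut of `G₁` separating `{c₁, d₁}` from the rest
    (hc₁ : ∀ x : V₁, G₁.Adj c₁ x → x ∈ ({a₁, b₁, d₁} : Finset V₁))
    (hd₁ : ∀ x : V₁, G₁.Adj d₁ x → x ∈ ({a₁, b₁, c₁} : Finset V₁))
    (hrest₁ : ∃ x : V₁, x ∉ ({a₁, b₁, c₁, d₁} : Finset V₁))
    -- `a₂, b₂, c₂, d₂` are distinct and induce a copy of `K₄` in `G₂`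
    (h12 : a₂ ≠ b₂) (h13 : a₂ ≠ c₂) (h14 : a₂ ≠ d₂)
    (h23 : b₂ ≠ c₂) (h24 : b₂ ≠ d₂) (h34 : c₂ ≠ d₂)
    (k1 : G₂.Adj a₂ b₂) (k2 : G₂.Adj a₂ c₂) (k3 : G₂.Adj a₂ d₂)
    (k4 : G₂.Adj b₂ c₂) (k5 : G₂.Adj b₂ d₂) (k6 : G₂.Adj c₂ d₂)
    -- `{a₂, b₂}` is a 2-vertex cut of `G₂` separating `{c₂, d₂}` from the rest
    (hc₂ : ∀ x : V₂, G₂.Adj c₂ x → x ∈ ({a₂, b₂, d₂} : Finset V₂))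
    (hd₂ : ∀ x : V₂, G₂.Adj d₂ x → x ∈ ({a₂, b₂, c₂} : Finset V₂))
    (hrest₂ : ∃ x : V₂, x ∉ ({a₂, b₂, c₂, d₂} : Finset V₂)) :
    IsCircuit (SimpleGraph.fromEdgeSet
      (({e | ∃ x y : {x : V₁ // x ∉ ({c₁, d₁} : Finset V₁)},
          G₁.Adj ↑x ↑y ∧ e = s(Sum.inl x, Sum.inl y)} :
          Set (Sym2 ({x : V₁ // x ∉ ({c₁, d₁} : Finset V₁)} ⊕
            {x : V₂ // x ∉ ({a₂, b₂, c₂, d₂} : Finset V₂)}))) ∪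
       {e | ∃ x y : {x : V₂ // x ∉ ({a₂, b₂, c₂, d₂} : Finset V₂)},
          G₂.Adj ↑x ↑y ∧ e = s(Sum.inr x, Sum.inr y)} ∪
       {e | ∃ y : {x : V₂ // x ∉ ({a₂, b₂, c₂, d₂} : Finset V₂)},
          G₂.Adj a₂ ↑y ∧ e = s(Sum.inl ⟨a₁, ga₁⟩, Sum.inr y)} ∪
       {e | ∃ y : {x : V₂ // x ∉ ({a₂, b₂, c₂, d₂} : Finset V₂)},
          G₂.Adj b₂ ↑y ∧ e = s(Sum.inl ⟨b₁, gb₁⟩, Sum.inr y)})) := by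
  classical
  have g13 : a₁ ≠ c₁ := fun h => ga₁ (by simp [h])
  have g14 : a₁ ≠ d₁ := fun h => ga₁ (by simp [h])
  have g23 : b₁ ≠ c₁ := fun h => gb₁ (by simp [h])
  have g24 : b₁ ≠ d₁ := fun h => gb₁ (by simp [h])
  set S1 : Set (Sym2 ({x : V₁ // x ∉ ({c₁, d₁} : Finset V₁)} ⊕
      {x : V₂ // x ∉ ({a₂, b₂, c₂, d₂} : Finset V₂)})) :=
    {e | ∃ x y : {x : V₁ // x ∉ ({c₁, d₁} : Finset V₁)},
        G₁.Adj ↑x ↑y ∧ e = s(Sum.inl x, Sum.inl y)} with hS1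
  set S2 : Set (Sym2 ({x : V₁ // x ∉ ({c₁, d₁} : Finset V₁)} ⊕
      {x : V₂ // x ∉ ({a₂, b₂, c₂, d₂} : Finset V₂)})) :=
    {e | ∃ x y : {x : V₂ // x ∉ ({a₂, b₂, c₂, d₂} : Finset V₂)},
        G₂.Adj ↑x ↑y ∧ e = s(Sum.inr x, Sum.inr y)} with hS2
  set Sa : Set (Sym2 ({x : V₁ // x ∉ ({c₁, d₁} : Finset V₁)} ⊕
      {x : V₂ // x ∉ ({a₂, b₂, c₂, d₂} : Finset V₂)})) :=
    {e | ∃ y : {x : V₂ // x ∉ ({a₂, b₂, c₂, d₂} : Finset V₂)},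
        G₂.Adj a₂ ↑y ∧ e = s(Sum.inl ⟨a₁, ga₁⟩, Sum.inr y)} with hSa
  set Sb : Set (Sym2 ({x : V₁ // x ∉ ({c₁, d₁} : Finset V₁)} ⊕
      {x : V₂ // x ∉ ({a₂, b₂, c₂, d₂} : Finset V₂)})) :=
    {e | ∃ y : {x : V₂ // x ∉ ({a₂, b₂, c₂, d₂} : Finset V₂)},
        G₂.Adj b₂ ↑y ∧ e = s(Sum.inl ⟨b₁, gb₁⟩, Sum.inr y)} with hSb
  show IsCircuit (SimpleGraph.fromEdgeSet (S1 ∪ S2 ∪ Sa ∪ Sb))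
  -- the edge set of the 2-sum
  have hE : (SimpleGraph.fromEdgeSet (S1 ∪ S2 ∪ Sa ∪ Sb)).edgeSet = S1 ∪ S2 ∪ Sa ∪ Sb := by
    rw [SimpleGraph.edgeSet_fromEdgeSet, sdiff_eq_self_iff_disjoint]
    rw [Set.disjoint_left]
    intro e hdiag hmem
    rcases hmem with ((⟨x, y, hadj, rfl⟩ | ⟨x, y, hadj, rfl⟩) | ⟨y, hadj, rfl⟩) | ⟨y, hadj, rfl⟩
    · exact absurd (congrArg Subtype.val (Sum.inl.inj (Sym2.mk_isDiag_iff.mp hdiag))) hadj.ne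
    · exact absurd (congrArg Subtype.val (Sum.inr.inj (Sym2.mk_isDiag_iff.mp hdiag))) hadj.ne
    · exact absurd (Sym2.mk_isDiag_iff.mp hdiag) (by simp)
    · exact absurd (Sym2.mk_isDiag_iff.mp hdiag) (by simp)
  -- cardinalities of the vertex types
  have hq1 : ({c₁, d₁} : Finset V₁).card = 2 := by
    rw [Finset.card_insert_of_notMem (by simp [g34]), Finset.card_singleton]
  have hq2 : ({a₂, b₂, c₂, d₂} : Finset V₂).card = 4 := by
    rw [Finset.card_insert_of_notMem (by simp [h12, h13, h14]),
      Finset.card_insert_of_notMem (by simp [h23, h24]),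
      Finset.card_insert_of_notMem (by simp [h34]), Finset.card_singleton]
  have hW1card : Fintype.card {x : V₁ // x ∉ ({c₁, d₁} : Finset V₁)} + 2 = Fintype.card V₁ := by
    have h3 : ({c₁, d₁} : Finset V₁).card ≤ Fintype.card V₁ := by
      rw [← Finset.card_univ]; exact Finset.card_le_univ _
    rw [Fintype.card_subtype]
    have h4 : (Finset.univ.filter (fun x : V₁ => x ∉ ({c₁, d₁} : Finset V₁)))
        = ({c₁, d₁} : Finset V₁)ᶜ := by
      ext x; simp [Finset.mem_compl]
    rw [h4, Finset.card_compl]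
    omega
  have hW2card : Fintype.card {x : V₂ // x ∉ ({a₂, b₂, c₂, d₂} : Finset V₂)} + 4
      = Fintype.card V₂ := by
    have h3 : ({a₂, b₂, c₂, d₂} : Finset V₂).card ≤ Fintype.card V₂ := by
      rw [← Finset.card_univ]; exact Finset.card_le_univ _
    rw [Fintype.card_subtype]
    have h4 : (Finset.univ.filter (fun x : V₂ => x ∉ ({a₂, b₂, c₂, d₂} : Finset V₂)))
        = ({a₂, b₂, c₂, d₂} : Finset V₂)ᶜ := by
      ext x; simp [Finset.mem_compl]
    rw [h4, Finset.card_compl]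
    omega
  -- ncard identities for the four pieces
  have hS1card : S1.ncard
      = {e ∈ G₁.edgeSet | ∀ v ∈ e, v ∉ ({c₁, d₁} : Finset V₁)}.ncard := by
    rw [hS1, ncard_pairSet' (Sum.inl_injective),
      ← ncard_pairSet' (Subtype.val_injective :
        Function.Injective (Subtype.val : {x : V₁ // x ∉ ({c₁, d₁} : Finset V₁)} → V₁))]
    congr 1
    ext e
    induction e using Sym2.ind with
    | _ u v =>
      constructor
      · rintro ⟨x, y, hadj, he⟩
        rw [he]
        refine ⟨hadj, ?_⟩
        rintro w hw
        rcases Sym2.mem_iff.mp hw with rfl | rfl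
        exacts [x.2, y.2]
      · rintro ⟨hadj, hall⟩
        exact ⟨⟨u, hall u (by simp)⟩, ⟨v, hall v (by simp)⟩, hadj, rfl⟩
  have hS2card : S2.ncard
      = {e ∈ G₂.edgeSet | ∀ v ∈ e, v ∉ ({a₂, b₂, c₂, d₂} : Finset V₂)}.ncard := by
    rw [hS2, ncard_pairSet' (Sum.inr_injective),
      ← ncard_pairSet' (Subtype.val_injective :
        Function.Injective (Subtype.val : {x : V₂ // x ∉ ({a₂, b₂, c₂, d₂} : Finset V₂)} → V₂))]
    congr 1
    ext e
    induction e using Sym2.ind with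
    | _ u v =>
      constructor
      · rintro ⟨x, y, hadj, he⟩
        rw [he]
        refine ⟨hadj, ?_⟩
        rintro w hw
        rcases Sym2.mem_iff.mp hw with rfl | rfl
        exacts [x.2, y.2]
      · rintro ⟨hadj, hall⟩
        exact ⟨⟨u, hall u (by simp)⟩, ⟨v, hall v (by simp)⟩, hadj, rfl⟩
  have hinjCa : Set.InjOn (fun v => s(a₂, v))
      {v | G₂.Adj a₂ v ∧ v ∉ ({a₂, b₂, c₂, d₂} : Finset V₂)} := by
    intro v hv v' hv' h
    rw [Sym2.eq_iff] at h
    rcases h with ⟨-, h⟩ | ⟨h1, -⟩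
    · exact h
    · exact absurd (by rw [← h1]; simp : v' ∈ ({a₂, b₂, c₂, d₂} : Finset V₂)) hv'.2
  have hinjCb : Set.InjOn (fun v => s(b₂, v))
      {v | G₂.Adj b₂ v ∧ v ∉ ({a₂, b₂, c₂, d₂} : Finset V₂)} := by
    intro v hv v' hv' h
    rw [Sym2.eq_iff] at h
    rcases h with ⟨-, h⟩ | ⟨h1, -⟩
    · exact h
    · exact absurd (by rw [← h1]; simp : v' ∈ ({a₂, b₂, c₂, d₂} : Finset V₂)) hv'.2
  have hvalW2 : Function.Injective
      (Subtype.val : {x : V₂ // x ∉ ({a₂, b₂, c₂, d₂} : Finset V₂)} → V₂) :=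
    Subtype.val_injective
  have hSacard : Sa.ncard
      = ((fun v => s(a₂, v)) '' {v | G₂.Adj a₂ v ∧ v ∉ ({a₂, b₂, c₂, d₂} : Finset V₂)}).ncard := by
    have hg : Function.Injective (fun y : {x : V₂ // x ∉ ({a₂, b₂, c₂, d₂} : Finset V₂)} =>
        s(Sum.inl (⟨a₁, ga₁⟩ : {x : V₁ // x ∉ ({c₁, d₁} : Finset V₁)}), Sum.inr y)) := by
      intro y y' h
      rw [Sym2.eq_iff] at h
      rcases h with ⟨-, h2⟩ | ⟨h1, -⟩
      · exact Sum.inr.inj h2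
      · exact absurd h1 (by simp)
    rw [hSa, ncard_exists_eq' hg.injOn, Set.ncard_image_of_injOn hinjCa,
      show {v | G₂.Adj a₂ v ∧ v ∉ ({a₂, b₂, c₂, d₂} : Finset V₂)}
          = Subtype.val '' {y : {x : V₂ // x ∉ ({a₂, b₂, c₂, d₂} : Finset V₂)} |
              G₂.Adj a₂ ↑y} from ?_,
      Set.ncard_image_of_injOn hvalW2.injOn]
    ext v
    constructor
    · rintro ⟨hadj, hv⟩; exact ⟨⟨v, hv⟩, hadj, rfl⟩
    · rintro ⟨y, hy, rfl⟩; exact ⟨hy, y.2⟩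
  have hSbcard : Sb.ncard
      = ((fun v => s(b₂, v)) '' {v | G₂.Adj b₂ v ∧ v ∉ ({a₂, b₂, c₂, d₂} : Finset V₂)}).ncard := by
    have hg : Function.Injective (fun y : {x : V₂ // x ∉ ({a₂, b₂, c₂, d₂} : Finset V₂)} =>
        s(Sum.inl (⟨b₁, gb₁⟩ : {x : V₁ // x ∉ ({c₁, d₁} : Finset V₁)}), Sum.inr y)) := by
      intro y y' h
      rw [Sym2.eq_iff] at h
      rcases h with ⟨-, h2⟩ | ⟨h1, -⟩
      · exact Sum.inr.inj h2
      · exact absurd h1 (by simp)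
    rw [hSb, ncard_exists_eq' hg.injOn, Set.ncard_image_of_injOn hinjCb,
      show {v | G₂.Adj b₂ v ∧ v ∉ ({a₂, b₂, c₂, d₂} : Finset V₂)}
          = Subtype.val '' {y : {x : V₂ // x ∉ ({a₂, b₂, c₂, d₂} : Finset V₂)} |
              G₂.Adj b₂ ↑y} from ?_,
      Set.ncard_image_of_injOn hvalW2.injOn]
    ext v
    constructor
    · rintro ⟨hadj, hv⟩; exact ⟨⟨v, hv⟩, hadj, rfl⟩
    · rintro ⟨y, hy, rfl⟩; exact ⟨hy, y.2⟩
  -- disjointness of the four pieces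
  have d12 : Disjoint S1 S2 := by
    rw [Set.disjoint_left]
    rintro e ⟨x, y, hadj, rfl⟩ ⟨x', y', hadj', he⟩
    rw [Sym2.eq_iff] at he
    rcases he with ⟨h1, -⟩ | ⟨h1, -⟩ <;> exact absurd h1 (by simp)
  have d1a : Disjoint S1 Sa := by
    rw [Set.disjoint_left]
    rintro e ⟨x, y, hadj, rfl⟩ ⟨y', hadj', he⟩
    rw [Sym2.eq_iff] at he
    rcases he with ⟨-, h2⟩ | ⟨h1, -⟩ <;> [exact absurd h2 (by simp); exact absurd h1 (by simp)]
  have d1b : Disjoint S1 Sb := by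
    rw [Set.disjoint_left]
    rintro e ⟨x, y, hadj, rfl⟩ ⟨y', hadj', he⟩
    rw [Sym2.eq_iff] at he
    rcases he with ⟨-, h2⟩ | ⟨h1, -⟩ <;> [exact absurd h2 (by simp); exact absurd h1 (by simp)]
  have d2a : Disjoint S2 Sa := by
    rw [Set.disjoint_left]
    rintro e ⟨x, y, hadj, rfl⟩ ⟨y', hadj', he⟩
    rw [Sym2.eq_iff] at he
    rcases he with ⟨h1, -⟩ | ⟨-, h2⟩ <;> [exact absurd h1 (by simp); exact absurd h2 (by simp)]
  have d2b : Disjoint S2 Sb := by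
    rw [Set.disjoint_left]
    rintro e ⟨x, y, hadj, rfl⟩ ⟨y', hadj', he⟩
    rw [Sym2.eq_iff] at he
    rcases he with ⟨h1, -⟩ | ⟨-, h2⟩ <;> [exact absurd h1 (by simp); exact absurd h2 (by simp)]
  have dab : Disjoint Sa Sb := by
    rw [Set.disjoint_left]
    rintro e ⟨y, hadj, rfl⟩ ⟨y', hadj', he⟩
    rw [Sym2.eq_iff] at he
    rcases he with ⟨h1, -⟩ | ⟨h1, -⟩
    · exact g12 (congrArg Subtype.val (Sum.inl.inj h1))
    · exact absurd h1 (by simp)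
  have hEcard : (SimpleGraph.fromEdgeSet (S1 ∪ S2 ∪ Sa ∪ Sb)).edgeSet.ncard
      = S1.ncard + S2.ncard + Sa.ncard + Sb.ncard := by
    rw [hE,
      Set.ncard_union_eq
        (Set.disjoint_union_left.mpr ⟨Set.disjoint_union_left.mpr ⟨d1b, d2b⟩, dab⟩)
        (Set.toFinite _) (Set.toFinite _),
      Set.ncard_union_eq (Set.disjoint_union_left.mpr ⟨d1a, d2a⟩)
        (Set.toFinite _) (Set.toFinite _),
      Set.ncard_union_eq d12 (Set.toFinite _) (Set.toFinite _)]
  have hL := left_count' G₁ g12 g13 g14 g23 g24 g34 hc₁ hd₁ l2 l3 l4 l5 l6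
  have hR := right_count' G₂ h12 h13 h14 h23 h24 h34 hc₂ hd₂ k1 k2 k3 k4 k5 k6
  have hZ1 := h₁.1
  have hZ2 := h₂.1
  constructor
  · -- edge count
    rw [hEcard, Fintype.card_sum]
    push_cast
    omega
  · -- sparsity
    intro X hX
    set Y1 : Finset V₁ := X.toLeft.image Subtype.val with hY1
    set Y2 : Finset V₂ := X.toRight.image Subtype.val with hY2
    have hY1mem : ∀ x : {x : V₁ // x ∉ ({c₁, d₁} : Finset V₁)},
        ((x : V₁) ∈ Y1 ↔ Sum.inl x ∈ X) := by
      intro x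
      rw [hY1]
      constructor
      · intro hm
        rcases Finset.mem_image.mp hm with ⟨y, hy, hxy⟩
        obtain rfl : y = x := Subtype.ext hxy
        exact Finset.mem_toLeft.mp hy
      · intro hm
        exact Finset.mem_image.mpr ⟨x, Finset.mem_toLeft.mpr hm, rfl⟩
    have hY2mem : ∀ x : {x : V₂ // x ∉ ({a₂, b₂, c₂, d₂} : Finset V₂)},
        ((x : V₂) ∈ Y2 ↔ Sum.inr x ∈ X) := by
      intro x
      rw [hY2]
      constructor
      · intro hm
        rcases Finset.mem_image.mp hm with ⟨y, hy, hxy⟩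
        obtain rfl : y = x := Subtype.ext hxy
        exact Finset.mem_toRight.mp hy
      · intro hm
        exact Finset.mem_image.mpr ⟨x, Finset.mem_toRight.mpr hm, rfl⟩
    have hY1avoid : ∀ v ∈ Y1, v ∉ ({c₁, d₁} : Finset V₁) := by
      intro v hv
      rcases Finset.mem_image.mp hv with ⟨y, -, rfl⟩
      exact y.2
    have hY2avoid : ∀ v ∈ Y2, v ∉ ({a₂, b₂, c₂, d₂} : Finset V₂) := by
      intro v hv
      rcases Finset.mem_image.mp hv with ⟨y, -, rfl⟩
      exact y.2
    have hY1card : Y1.card = X.toLeft.card :=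
      Finset.card_image_of_injective _ Subtype.val_injective
    have hY2card : Y2.card = X.toRight.card :=
      Finset.card_image_of_injective _ Subtype.val_injective
    have hXcard : X.toLeft.card + X.toRight.card = X.card :=
      Finset.card_toLeft_add_card_toRight
    set P : Set (Sym2 ({x : V₁ // x ∉ ({c₁, d₁} : Finset V₁)} ⊕
        {x : V₂ // x ∉ ({a₂, b₂, c₂, d₂} : Finset V₂)})) :=
      {e | ∀ v ∈ e, v ∈ (↑X : Set _)} with hP
    -- splitting the induced edge set into four pieces
    have hsplit : indEdges (SimpleGraph.fromEdgeSet (S1 ∪ S2 ∪ Sa ∪ Sb)) ↑X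
        ≤ (S1 ∩ P).ncard + (S2 ∩ P).ncard + (Sa ∩ P).ncard + (Sb ∩ P).ncard := by
      have hcover : {e ∈ (SimpleGraph.fromEdgeSet (S1 ∪ S2 ∪ Sa ∪ Sb)).edgeSet |
          ∀ v ∈ e, v ∈ (↑X : Set _)} ⊆ (S1 ∩ P) ∪ ((S2 ∩ P) ∪ ((Sa ∩ P) ∪ (Sb ∩ P))) := by
        rintro e ⟨he, hp⟩
        rw [hE] at he
        rcases he with ((h | h) | h) | h
        · exact Or.inl ⟨h, hp⟩
        · exact Or.inr (Or.inl ⟨h, hp⟩)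
        · exact Or.inr (Or.inr (Or.inl ⟨h, hp⟩))
        · exact Or.inr (Or.inr (Or.inr ⟨h, hp⟩))
      exact (Set.ncard_le_ncard hcover (Set.toFinite _)).trans (ncard_union4_le' _ _ _ _)
    -- piece 1
    have hp1 : (S1 ∩ P).ncard ≤ {e ∈ G₁.edgeSet | ∀ v ∈ e, v ∈ (↑Y1 : Set V₁)}.ncard := by
      have heq : S1 ∩ P = {e | ∃ x y : {x : V₁ // x ∉ ({c₁, d₁} : Finset V₁)},
          (G₁.Adj ↑x ↑y ∧ Sum.inl x ∈ X ∧ Sum.inl y ∈ X) ∧ e = s(Sum.inl x, Sum.inl y)} := by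
        ext e
        constructor
        · rintro ⟨⟨x, y, hadj, rfl⟩, hp⟩
          exact ⟨x, y, ⟨hadj, hp _ (by simp), hp _ (by simp)⟩, rfl⟩
        · rintro ⟨x, y, ⟨hadj, hx, hy⟩, rfl⟩
          refine ⟨⟨x, y, hadj, rfl⟩, ?_⟩
          rintro v hv
          rcases Sym2.mem_iff.mp hv with rfl | rfl <;> [exact hx; exact hy]
      rw [heq, ncard_pairSet' Sum.inl_injective,
        ← ncard_pairSet' (Subtype.val_injective :
          Function.Injective (Subtype.val : {x : V₁ // x ∉ ({c₁, d₁} : Finset V₁)} → V₁))]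
      apply Set.ncard_le_ncard ?_ (Set.toFinite _)
      rintro e ⟨x, y, ⟨hadj, hx, hy⟩, rfl⟩
      refine ⟨hadj, ?_⟩
      rintro v hv
      rcases Sym2.mem_iff.mp hv with rfl | rfl
      · exact (hY1mem x).mpr hx
      · exact (hY1mem y).mpr hy
    -- piece 2
    have hp2 : (S2 ∩ P).ncard ≤ {e ∈ G₂.edgeSet | ∀ v ∈ e, v ∈ (↑Y2 : Set V₂)}.ncard := by
      have heq : S2 ∩ P = {e | ∃ x y : {x : V₂ // x ∉ ({a₂, b₂, c₂, d₂} : Finset V₂)},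
          (G₂.Adj ↑x ↑y ∧ Sum.inr x ∈ X ∧ Sum.inr y ∈ X) ∧ e = s(Sum.inr x, Sum.inr y)} := by
        ext e
        constructor
        · rintro ⟨⟨x, y, hadj, rfl⟩, hp⟩
          exact ⟨x, y, ⟨hadj, hp _ (by simp), hp _ (by simp)⟩, rfl⟩
        · rintro ⟨x, y, ⟨hadj, hx, hy⟩, rfl⟩
          refine ⟨⟨x, y, hadj, rfl⟩, ?_⟩
          rintro v hv
          rcases Sym2.mem_iff.mp hv with rfl | rfl <;> [exact hx; exact hy]
      rw [heq, ncard_pairSet' Sum.inr_injective,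
        ← ncard_pairSet' (Subtype.val_injective :
          Function.Injective (Subtype.val : {x : V₂ // x ∉ ({a₂, b₂, c₂, d₂} : Finset V₂)} → V₂))]
      apply Set.ncard_le_ncard ?_ (Set.toFinite _)
      rintro e ⟨x, y, ⟨hadj, hx, hy⟩, rfl⟩
      refine ⟨hadj, ?_⟩
      rintro v hv
      rcases Sym2.mem_iff.mp hv with rfl | rfl
      · exact (hY2mem x).mpr hx
      · exact (hY2mem y).mpr hy
    -- piece a
    have hpa : (Sa ∩ P).ncard
        ≤ ((fun v => s(a₂, v)) '' {v | G₂.Adj a₂ v ∧ v ∈ (↑Y2 : Set V₂)}).ncard := by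
      have hg : Function.Injective (fun y : {x : V₂ // x ∉ ({a₂, b₂, c₂, d₂} : Finset V₂)} =>
          s(Sum.inl (⟨a₁, ga₁⟩ : {x : V₁ // x ∉ ({c₁, d₁} : Finset V₁)}), Sum.inr y)) := by
        intro y y' h
        rw [Sym2.eq_iff] at h
        rcases h with ⟨-, h2⟩ | ⟨h1, -⟩
        · exact Sum.inr.inj h2
        · exact absurd h1 (by simp)
      have hinjTa : Set.InjOn (fun v => s(a₂, v)) {v | G₂.Adj a₂ v ∧ v ∈ (↑Y2 : Set V₂)} := by
        intro v hv v' hv' h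
        rw [Sym2.eq_iff] at h
        rcases h with ⟨-, h⟩ | ⟨h1, -⟩
        · exact h
        · exact absurd (by rw [← h1]; simp : v' ∈ ({a₂, b₂, c₂, d₂} : Finset V₂))
            (hY2avoid v' hv'.2)
      have hsubM : Sa ∩ P ⊆ {e | ∃ y : {x : V₂ // x ∉ ({a₂, b₂, c₂, d₂} : Finset V₂)},
          (G₂.Adj a₂ ↑y ∧ Sum.inr y ∈ X) ∧ e = s(Sum.inl ⟨a₁, ga₁⟩, Sum.inr y)} := by
        rintro e ⟨⟨y, hadj, rfl⟩, hp⟩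
        exact ⟨y, ⟨hadj, hp _ (by simp)⟩, rfl⟩
      have h1 := Set.ncard_le_ncard hsubM (Set.toFinite _)
      rw [ncard_exists_eq' hg.injOn] at h1
      rw [Set.ncard_image_of_injOn hinjTa,
        show {v | G₂.Adj a₂ v ∧ v ∈ (↑Y2 : Set V₂)}
            = Subtype.val '' {y : {x : V₂ // x ∉ ({a₂, b₂, c₂, d₂} : Finset V₂)} |
                G₂.Adj a₂ ↑y ∧ Sum.inr y ∈ X} from ?_,
        Set.ncard_image_of_injOn Subtype.val_injective.injOn]
      · exact h1
      ext v
      constructor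
      · rintro ⟨hadj, hv⟩
        rcases Finset.mem_image.mp hv with ⟨y, hy, rfl⟩
        exact ⟨y, ⟨hadj, Finset.mem_toRight.mp hy⟩, rfl⟩
      · rintro ⟨y, ⟨hadj, hy⟩, rfl⟩
        exact ⟨hadj, Finset.mem_image.mpr ⟨y, Finset.mem_toRight.mpr hy, rfl⟩⟩
    -- piece b
    have hpb : (Sb ∩ P).ncard
        ≤ ((fun v => s(b₂, v)) '' {v | G₂.Adj b₂ v ∧ v ∈ (↑Y2 : Set V₂)}).ncard := by
      have hg : Function.Injective (fun y : {x : V₂ // x ∉ ({a₂, b₂, c₂, d₂} : Finset V₂)} =>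
          s(Sum.inl (⟨b₁, gb₁⟩ : {x : V₁ // x ∉ ({c₁, d₁} : Finset V₁)}), Sum.inr y)) := by
        intro y y' h
        rw [Sym2.eq_iff] at h
        rcases h with ⟨-, h2⟩ | ⟨h1, -⟩
        · exact Sum.inr.inj h2
        · exact absurd h1 (by simp)
      have hinjTb : Set.InjOn (fun v => s(b₂, v)) {v | G₂.Adj b₂ v ∧ v ∈ (↑Y2 : Set V₂)} := by
        intro v hv v' hv' h
        rw [Sym2.eq_iff] at h
        rcases h with ⟨-, h⟩ | ⟨h1, -⟩
        · exact h
        · exact absurd (by rw [← h1]; simp : v' ∈ ({a₂, b₂, c₂, d₂} : Finset V₂))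
            (hY2avoid v' hv'.2)
      have hsubM : Sb ∩ P ⊆ {e | ∃ y : {x : V₂ // x ∉ ({a₂, b₂, c₂, d₂} : Finset V₂)},
          (G₂.Adj b₂ ↑y ∧ Sum.inr y ∈ X) ∧ e = s(Sum.inl ⟨b₁, gb₁⟩, Sum.inr y)} := by
        rintro e ⟨⟨y, hadj, rfl⟩, hp⟩
        exact ⟨y, ⟨hadj, hp _ (by simp)⟩, rfl⟩
      have h1 := Set.ncard_le_ncard hsubM (Set.toFinite _)
      rw [ncard_exists_eq' hg.injOn] at h1
      rw [Set.ncard_image_of_injOn hinjTb,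
        show {v | G₂.Adj b₂ v ∧ v ∈ (↑Y2 : Set V₂)}
            = Subtype.val '' {y : {x : V₂ // x ∉ ({a₂, b₂, c₂, d₂} : Finset V₂)} |
                G₂.Adj b₂ ↑y ∧ Sum.inr y ∈ X} from ?_,
        Set.ncard_image_of_injOn Subtype.val_injective.injOn]
      · exact h1
      ext v
      constructor
      · rintro ⟨hadj, hv⟩
        rcases Finset.mem_image.mp hv with ⟨y, hy, rfl⟩
        exact ⟨y, ⟨hadj, Finset.mem_toRight.mp hy⟩, rfl⟩
      · rintro ⟨y, ⟨hadj, hy⟩, rfl⟩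
        exact ⟨hadj, Finset.mem_image.mpr ⟨y, Finset.mem_toRight.mpr hy, rfl⟩⟩
    -- empty pieces
    have hpa0 : Sum.inl (⟨a₁, ga₁⟩ : {x : V₁ // x ∉ ({c₁, d₁} : Finset V₁)}) ∉ X →
        (Sa ∩ P).ncard = 0 := by
      intro hα
      have h0 : Sa ∩ P = ∅ := by
        rw [Set.eq_empty_iff_forall_notMem]
        rintro e ⟨⟨y, hadj, rfl⟩, hp⟩
        exact hα (hp _ (by simp))
      rw [h0, Set.ncard_empty]
    have hpb0 : Sum.inl (⟨b₁, gb₁⟩ : {x : V₁ // x ∉ ({c₁, d₁} : Finset V₁)}) ∉ X →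
        (Sb ∩ P).ncard = 0 := by
      intro hβ
      have h0 : Sb ∩ P = ∅ := by
        rw [Set.eq_empty_iff_forall_notMem]
        rintro e ⟨⟨y, hadj, rfl⟩, hp⟩
        exact hβ (hp _ (by simp))
      rw [h0, Set.ncard_empty]
    -- G₁ generic bound
    have hprop1 : Y1 ⊂ Finset.univ := by
      rw [Finset.ssubset_univ_iff]
      intro h
      exact hY1avoid c₁ (h ▸ Finset.mem_univ c₁) (by simp)
    have hb1 : indEdges G₁ ↑Y1 ≤ 2 * Y1.card - 2 := h₁.2 Y1 hprop1
    have hbridge1 : {e ∈ G₁.edgeSet | ∀ v ∈ e, v ∈ (↑Y1 : Set V₁)}.ncard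
        = indEdges G₁ ↑Y1 := rfl
    have ha₂Y2 : a₂ ∉ (↑Y2 : Set V₂) := fun h => hY2avoid a₂ h (by simp)
    have hb₂Y2 : b₂ ∉ (↑Y2 : Set V₂) := fun h => hY2avoid b₂ h (by simp)
    have ha₂Y2' : a₂ ∉ Y2 := fun h => hY2avoid a₂ h (by simp)
    have hb₂Y2' : b₂ ∉ Y2 := fun h => hY2avoid b₂ h (by simp)
    have hc₂Y2' : c₂ ∉ Y2 := fun h => hY2avoid c₂ h (by simp)
    have hd₂Y2' : d₂ ∉ Y2 := fun h => hY2avoid d₂ h (by simp)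
    obtain ⟨z, hz⟩ : ∃ z, z ∉ X := by
      by_contra hcon
      push_neg at hcon
      exact (Finset.ssubset_univ_iff.mp hX) (Finset.eq_univ_iff_forall.mpr hcon)
    by_cases hα : Sum.inl (⟨a₁, ga₁⟩ : {x : V₁ // x ∉ ({c₁, d₁} : Finset V₁)}) ∈ X
    · have haY1 : a₁ ∈ Y1 := (hY1mem ⟨a₁, ga₁⟩).mpr hα
      have hY1pos : 0 < Y1.card := Finset.card_pos.mpr ⟨a₁, haY1⟩
      by_cases hβ : Sum.inl (⟨b₁, gb₁⟩ : {x : V₁ // x ∉ ({c₁, d₁} : Finset V₁)}) ∈ X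
      · -- both cut vertices present
        have hbY1 : b₁ ∈ Y1 := (hY1mem ⟨b₁, gb₁⟩).mpr hβ
        have hrb := right_bound11' G₂ h12 k1 (↑Y2 : Set V₂) ha₂Y2 hb₂Y2
        rw [show (insert a₂ (insert b₂ (↑Y2 : Set V₂))) = ↑(insert a₂ (insert b₂ Y2)) from
          by simp] at hrb
        have hZcard : (insert a₂ (insert b₂ Y2)).card = Y2.card + 2 := by
          rw [Finset.card_insert_of_notMem (by simp [h12, ha₂Y2']),
            Finset.card_insert_of_notMem hb₂Y2']
        have hZprop : insert a₂ (insert b₂ Y2) ⊂ Finset.univ := by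
          rw [Finset.ssubset_univ_iff]
          intro h
          have hc : c₂ ∈ insert a₂ (insert b₂ Y2) := h ▸ Finset.mem_univ c₂
          rcases Finset.mem_insert.mp hc with h' | h'
          · exact h13 h'.symm
          rcases Finset.mem_insert.mp h' with h'' | h''
          · exact h23 h''.symm
          · exact hc₂Y2' h''
        have hb2' : indEdges G₂ ↑(insert a₂ (insert b₂ Y2)) ≤ 2 * (Y2.card + 2) - 2 := by
          have h5 := h₂.2 _ hZprop
          rwa [hZcard] at h5
        rcases z with w | w
        · -- improvement on the left
          have hwY1 : (↑w : V₁) ∉ Y1 := fun h => hz ((hY1mem w).mp h)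
          have hw2 := w.2
          have hprop : insert c₁ (insert d₁ Y1) ⊂ Finset.univ := by
            rw [Finset.ssubset_univ_iff]
            intro h
            have hw : (↑w : V₁) ∈ insert c₁ (insert d₁ Y1) := h ▸ Finset.mem_univ _
            rcases Finset.mem_insert.mp hw with h' | h'
            · exact hw2 (by simp [h'])
            rcases Finset.mem_insert.mp h' with h'' | h''
            · exact hw2 (by simp [h''])
            · exact hwY1 h''
          have himp := improved' h₁ g12 g13 g14 g23 g24 g34 l2 l3 l4 l5 l6 haY1 hbY1
            (fun h => hY1avoid c₁ h (by simp)) (fun h => hY1avoid d₁ h (by simp)) hprop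
          omega
        · -- improvement on the right
          have hwY2 : (↑w : V₂) ∉ Y2 := fun h => hz ((hY2mem w).mp h)
          have hw2 := w.2
          simp only [Finset.mem_insert, Finset.mem_singleton, not_or] at hw2
          have hprop : insert c₂ (insert d₂ (insert a₂ (insert b₂ Y2))) ⊂ Finset.univ := by
            rw [Finset.ssubset_univ_iff]
            intro h
            have hw : (↑w : V₂) ∈ insert c₂ (insert d₂ (insert a₂ (insert b₂ Y2))) :=
              h ▸ Finset.mem_univ _
            simp only [Finset.mem_insert] at hw
            rcases hw with h' | h' | h' | h' | h'
            · exact hw2.2.2.1 h'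
            · exact hw2.2.2.2 h'
            · exact hw2.1 h'
            · exact hw2.2.1 h'
            · exact hwY2 h'
          have himp := improved' h₂ h12 h13 h14 h23 h24 h34 k2 k3 k4 k5 k6
            (Finset.mem_insert_self _ _)
            (Finset.mem_insert_of_mem (Finset.mem_insert_self _ _))
            (by simp [h13.symm, h23.symm, hc₂Y2'])
            (by simp [h14.symm, h24.symm, hd₂Y2'])
            hprop
          rw [hZcard] at himp
          omega
      · -- only a present
        have h0 := hpb0 hβ
        have hrb := right_bound10' G₂ (↑Y2 : Set V₂) ha₂Y2
        rw [show (insert a₂ (↑Y2 : Set V₂)) = ↑(insert a₂ Y2) from by simp] at hrb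
        have hZcard : (insert a₂ Y2).card = Y2.card + 1 :=
          Finset.card_insert_of_notMem ha₂Y2'
        have hZprop : insert a₂ Y2 ⊂ Finset.univ := by
          rw [Finset.ssubset_univ_iff]
          intro h
          have hc : c₂ ∈ insert a₂ Y2 := h ▸ Finset.mem_univ c₂
          rcases Finset.mem_insert.mp hc with h' | h'
          · exact h13 h'.symm
          · exact hc₂Y2' h'
        have hb2' : indEdges G₂ ↑(insert a₂ Y2) ≤ 2 * (Y2.card + 1) - 2 := by
          have h5 := h₂.2 _ hZprop
          rwa [hZcard] at h5
        omega
    · by_cases hβ : Sum.inl (⟨b₁, gb₁⟩ : {x : V₁ // x ∉ ({c₁, d₁} : Finset V₁)}) ∈ X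
      · -- only b present
        have hbY1 : b₁ ∈ Y1 := (hY1mem ⟨b₁, gb₁⟩).mpr hβ
        have hY1pos : 0 < Y1.card := Finset.card_pos.mpr ⟨b₁, hbY1⟩
        have h0 := hpa0 hα
        have hrb := right_bound10' G₂ (↑Y2 : Set V₂) hb₂Y2
        rw [show (insert b₂ (↑Y2 : Set V₂)) = ↑(insert b₂ Y2) from by simp] at hrb
        have hZcard : (insert b₂ Y2).card = Y2.card + 1 :=
          Finset.card_insert_of_notMem hb₂Y2'
        have hZprop : insert b₂ Y2 ⊂ Finset.univ := by
          rw [Finset.ssubset_univ_iff]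
          intro h
          have hc : c₂ ∈ insert b₂ Y2 := h ▸ Finset.mem_univ c₂
          rcases Finset.mem_insert.mp hc with h' | h'
          · exact h23 h'.symm
          · exact hc₂Y2' h'
        have hb2' : indEdges G₂ ↑(insert b₂ Y2) ≤ 2 * (Y2.card + 1) - 2 := by
          have h5 := h₂.2 _ hZprop
          rwa [hZcard] at h5
        omega
      · -- neither present
        have h0a := hpa0 hα
        have h0b := hpb0 hβ
        have hprop2 : Y2 ⊂ Finset.univ := by
          rw [Finset.ssubset_univ_iff]
          intro h
          exact hc₂Y2' (h ▸ Finset.mem_univ c₂)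
        have hb2' : indEdges G₂ ↑Y2 ≤ 2 * Y2.card - 2 := h₂.2 Y2 hprop2
        have hbridge2 : {e ∈ G₂.edgeSet | ∀ v ∈ e, v ∈ (↑Y2 : Set V₂)}.ncard
            = indEdges G₂ ↑Y2 := rfl
        omega
end
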